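/- arXiv:1810.06833 — 10 statements merged into one kernel-verified Lean document; each statement's English description precedes it below -/
import Mathlib

section
/- Let f : ℝ^n → ℝ be continuously differentiable on the nonnegative orthant and let γ ≥ 0. If for all x, y in the nonnegative orthant with x ≤ y (coordinatewise) and every coordinate i one has ∂_i f(x) ≥ γ·∂_i f(y), then for all x, y in the nonnegative orthant with x ≤ y, every real k ≥ 0 and every coordinate i, f(x + k·χ_i) − f(x) ≥ γ·(f(y + k·χ_i) − f(y)); that is, f has DR-submodularity ratio at least γ. -/
/-! For `0 ≤ x ≤ y` and `e = χ_i`, the function `t ↦ f (x + t • e) - γ * f (y + t • e)`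
has derivative `∂_i f (x + t • e) - γ * ∂_i f (y + t • e)`, which is nonnegative by
hypothesis because `x + t • e ≤ y + t • e` both lie in the orthant. So this function is
monotone on `[0, k]`, and comparing its values at `0` and `k` is the claim. -/

open Set

theorem sub_le_sub_of_hasDerivAt_le {u v u' v' : ℝ → ℝ} {a b : ℝ} (hab : a ≤ b)
    (hu : ∀ t ∈ Icc a b, HasDerivAt u (u' t) t) (hv : ∀ t ∈ Icc a b, HasDerivAt v (v' t) t)
    (hle : ∀ t ∈ Ioo a b, v' t ≤ u' t) : v b - v a ≤ u b - u a := by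
  have hderiv : ∀ t ∈ Icc a b, HasDerivAt (u - v) (u' t - v' t) t :=
    fun t ht ↦ (hu t ht).sub (hv t ht)
  have hmono : MonotoneOn (u - v) (Icc a b) := by
    refine monotoneOn_of_hasDerivWithinAt_nonneg (f' := u' - v') (convex_Icc a b)
      (fun t ht ↦ (hderiv t ht).continuousAt.continuousWithinAt) (fun t ht ↦ ?_)
      (fun t ht ↦ ?_)
    · rw [interior_Icc] at ht
      exact (hderiv t (Ioo_subset_Icc_self ht)).hasDerivWithinAt
    · rw [interior_Icc] at ht
      exact sub_nonneg.2 (hle t ht)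
  have hends := hmono (left_mem_Icc.2 hab) (right_mem_Icc.2 hab) hab
  simp only [Pi.sub_apply] at hends
  linarith

theorem HasFDerivAt.hasDerivAt_comp_add_smul {E : Type*} [NormedAddCommGroup E] [NormedSpace ℝ E]
    {f : E → ℝ} {L : E →L[ℝ] ℝ} {x e : E} {t : ℝ} (hf : HasFDerivAt f L (x + t • e)) :
    HasDerivAt (fun s : ℝ ↦ f (x + s • e)) (L e) t := by
  have hline : HasDerivAt (fun s : ℝ ↦ x + s • e) e t := by
    simpa using ((hasDerivAt_id t).smul_const e).const_add x
  exact hf.comp_hasDerivAt t hline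

theorem mul_sub_le_sub_of_fderiv_apply_le {E : Type*} [NormedAddCommGroup E] [NormedSpace ℝ E]
    {f : E → ℝ} {f' : E → E →L[ℝ] ℝ} {x y e : E} {γ k : ℝ} (hk : 0 ≤ k)
    (hfx : ∀ t ∈ Icc 0 k, HasFDerivAt f (f' (x + t • e)) (x + t • e))
    (hfy : ∀ t ∈ Icc 0 k, HasFDerivAt f (f' (y + t • e)) (y + t • e))
    (hle : ∀ t ∈ Ioo 0 k, γ * f' (y + t • e) e ≤ f' (x + t • e) e) :
    γ * (f (y + k • e) - f y) ≤ f (x + k • e) - f x := by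
  have hends := sub_le_sub_of_hasDerivAt_le hk
    (fun t ht ↦ (hfx t ht).hasDerivAt_comp_add_smul)
    (fun t ht ↦ ((hfy t ht).hasDerivAt_comp_add_smul).const_mul γ) hle
  simpa only [zero_smul, add_zero, mul_sub] using hends

theorem stmt_0_general {n : ℕ} (f : (Fin n → ℝ) → ℝ)
    (f' : (Fin n → ℝ) → ((Fin n → ℝ) →L[ℝ] ℝ))
    (hdiff : ∀ x : Fin n → ℝ, 0 ≤ x → HasFDerivAt f (f' x) x)
    (γ : ℝ)
    (hgrad : ∀ x y : Fin n → ℝ, 0 ≤ x → x ≤ y → ∀ i : Fin n,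
      f' x ((Pi.single i 1 : Fin n → ℝ)) ≥ γ * f' y ((Pi.single i 1 : Fin n → ℝ))) :
    ∀ x y : Fin n → ℝ, 0 ≤ x → x ≤ y → ∀ k : ℝ, 0 ≤ k → ∀ i : Fin n,
      f (x + k • (Pi.single i 1 : Fin n → ℝ)) - f x ≥ γ * (f (y + k • (Pi.single i 1 : Fin n → ℝ)) - f y) := by
  intro x y hx hxy k hk i
  have he : (0 : Fin n → ℝ) ≤ Pi.single i 1 := Pi.single_nonneg.2 zero_le_one
  have hshift : ∀ {z : Fin n → ℝ} {t : ℝ}, 0 ≤ z → 0 ≤ t → 0 ≤ z + t • Pi.single i 1 :=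
    fun hz ht ↦ add_nonneg hz (smul_nonneg ht he)
  exact mul_sub_le_sub_of_fderiv_apply_le hk
    (fun t ht ↦ hdiff _ (hshift hx ht.1))
    (fun t ht ↦ hdiff _ (hshift (hx.trans hxy) ht.1))
    (fun t ht ↦ hgrad _ _ (hshift hx ht.1.le) (add_le_add_left hxy _) i)

/-- If a continuously differentiable function on the nonnegative orthant has
`∂_i f(x) ≥ γ·∂_i f(y)` whenever `0 ≤ x ≤ y`, then it has DR-submodularity ratio
at least `γ`. -/
theorem stmt_0 {n : ℕ} (f : (Fin n → ℝ) → ℝ)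
    (f' : (Fin n → ℝ) → ((Fin n → ℝ) →L[ℝ] ℝ))
    (hdiff : ∀ x : Fin n → ℝ, 0 ≤ x → HasFDerivAt f (f' x) x)
    (hcont : ContinuousOn f' {x : Fin n → ℝ | 0 ≤ x})
    (γ : ℝ) (hγ : 0 ≤ γ)
    (hgrad : ∀ x y : Fin n → ℝ, 0 ≤ x → x ≤ y → ∀ i : Fin n,
      f' x ((Pi.single i 1 : Fin n → ℝ)) ≥ γ * f' y ((Pi.single i 1 : Fin n → ℝ))) :
    ∀ x y : Fin n → ℝ, 0 ≤ x → x ≤ y → ∀ k : ℝ, 0 ≤ k → ∀ i : Fin n,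
      f (x + k • (Pi.single i 1 : Fin n → ℝ)) - f x ≥ γ * (f (y + k • (Pi.single i 1 : Fin n → ℝ)) - f y) :=
  stmt_0_general f f' hdiff γ hgrad
end

section
/- Let f : ℝ^n → ℝ be monotone on the nonnegative orthant with submodularity ratio at least α, where α ≥ 0. Then for all x, y in the nonnegative orthant with x ≤ y (coordinatewise) and every vector v ∈ ℝ^n with v ≥ 0 such that x_i = y_i for every coordinate i with v_i > 0, one has f(x + v) − f(x) ≥ α·(f(y + v) − f(y)). -/
/-!
Write `v = ∑ i, v i • χ_i`. The ratio inequality for a single coordinate increment is the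
hypothesis, and it is stable under adding nonnegative increments: for `v = v₁ + v₂` the gain
`f (x + v) - f x` splits as the gain of `v₁` at `x` plus the gain of `v₂` at `x + v₁`, and
`x + v₁`, `y + v₁` still agree on the positive coordinates of `v₂`.
-/

variable {ι : Type*}

def IsRatioIncrement (f : (ι → ℝ) → ℝ) (α : ℝ) (v : ι → ℝ) : Prop :=
  0 ≤ v ∧ ∀ x y : ι → ℝ, 0 ≤ x → x ≤ y → (∀ i, 0 < v i → x i = y i) →
    α * (f (y + v) - f y) ≤ f (x + v) - f x

namespace IsRatioIncrement

variable {f : (ι → ℝ) → ℝ} {α : ℝ}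

theorem zero : IsRatioIncrement f α 0 :=
  ⟨le_rfl, fun x y _ _ _ => by simp⟩

theorem add {v w : ι → ℝ} (hv : IsRatioIncrement f α v) (hw : IsRatioIncrement f α w) :
    IsRatioIncrement f α (v + w) := by
  refine ⟨add_nonneg hv.1 hw.1, fun x y hx hxy hsupp => ?_⟩
  have hv_supp : ∀ i, 0 < v i → x i = y i := fun i hi =>
    hsupp i (add_pos_of_pos_of_nonneg hi (hw.1 i))
  have hw_supp : ∀ i, 0 < w i → (x + v) i = (y + v) i := fun i hi => by
    simp only [Pi.add_apply, hsupp i (add_pos_of_nonneg_of_pos (hv.1 i) hi)]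
  have hv_gain := hv.2 x y hx hxy hv_supp
  have hw_gain := hw.2 (x + v) (y + v) (add_nonneg hx hv.1) (add_le_add_left hxy v) hw_supp
  simp only [← add_assoc] at hw_gain ⊢
  linarith

end IsRatioIncrement

theorem isRatioIncrement_of_forall_single [DecidableEq ι] {f : (ι → ℝ) → ℝ} {α : ℝ}
    (hsub : ∀ x y : ι → ℝ, 0 ≤ x → x ≤ y → ∀ i : ι, x i = y i →
      ∀ k : ℝ, 0 ≤ k →
      f (x + k • (Pi.single i 1 : ι → ℝ)) - f x ≥ α * (f (y + k • (Pi.single i 1 : ι → ℝ)) - f y))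
    {i : ι} {k : ℝ} (hk : 0 ≤ k) : IsRatioIncrement f α (Pi.single i k) := by
  rcases hk.eq_or_lt with rfl | hk
  · simpa using IsRatioIncrement.zero
  refine ⟨Pi.single_nonneg.2 hk.le, fun x y hx hxy hsupp => ?_⟩
  have hxy_i : x i = y i := hsupp i (by simpa using hk)
  have hsingle : k • (Pi.single i 1 : ι → ℝ) = Pi.single i k := by
    rw [← Pi.single_smul', smul_eq_mul, mul_one]
  simpa only [hsingle, ge_iff_le] using hsub x y hx hxy i hxy_i k hk.le

theorem stmt_3_general {n : ℕ} (f : (Fin n → ℝ) → ℝ) (α : ℝ)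
    (hsub : ∀ x y : Fin n → ℝ, 0 ≤ x → x ≤ y → ∀ i : Fin n, x i = y i →
      ∀ k : ℝ, 0 ≤ k →
      f (x + k • (Pi.single i 1 : Fin n → ℝ)) - f x ≥ α * (f (y + k • (Pi.single i 1 : Fin n → ℝ)) - f y)) :
    ∀ x y v : Fin n → ℝ, 0 ≤ x → x ≤ y → 0 ≤ v →
      (∀ i : Fin n, 0 < v i → x i = y i) →
      f (x + v) - f x ≥ α * (f (y + v) - f y) := by
  intro x y v hx hxy hv hsupp
  have hv_ratio : IsRatioIncrement f α v := by
    rw [← Finset.univ_sum_single v]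
    exact Finset.sum_induction _ (IsRatioIncrement f α) (fun _ _ => IsRatioIncrement.add)
      IsRatioIncrement.zero fun i _ => isRatioIncrement_of_forall_single hsub (hv i)
  exact hv_ratio.2 x y hx hxy hsupp

/-- A monotone function with submodularity ratio at least `α` satisfies the
inequality for arbitrary nonnegative vector increments `v`, provided
`x i = y i` at every coordinate where `v i > 0`. -/
theorem stmt_3 {n : ℕ} (f : (Fin n → ℝ) → ℝ) (α : ℝ) (hα : 0 ≤ α)
    (hmono : ∀ x y : Fin n → ℝ, 0 ≤ x → x ≤ y → f x ≤ f y)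
    (hsub : ∀ x y : Fin n → ℝ, 0 ≤ x → x ≤ y → ∀ i : Fin n, x i = y i →
      ∀ k : ℝ, 0 ≤ k →
      f (x + k • (Pi.single i 1 : Fin n → ℝ)) - f x ≥ α * (f (y + k • (Pi.single i 1 : Fin n → ℝ)) - f y)) :
    ∀ x y v : Fin n → ℝ, 0 ≤ x → x ≤ y → 0 ≤ v →
      (∀ i : Fin n, 0 < v i → x i = y i) →
      f (x + v) - f x ≥ α * (f (y + v) - f y) :=
  stmt_3_general f α hsub
end

section
/- (Lemma 2) Let f : ℝ^n → ℝ be monotone on the nonnegative orthant with DR-submodularity ratio at least β, where 0 < β ≤ 1. Let 𝓔 ⊆ ℝ^n be a set of nonnegative vectors, let l be a positive integer, let e_1, …, e_l ∈ 𝓔 (repetitions allowed) and let v* = e_1 + ⋯ + e_l. Then for every x in the nonnegative orthant there exists e* ∈ {e_1, …, e_l} ⊆ 𝓔 such that f(x + e*) − f(x) ≥ (β/l)·(f(v*) − f(x)). -/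
/-!
The DR-ratio inequality, stated for steps along a single coordinate, extends by telescoping to
steps along any nonnegative vector. Telescoping once more from `x` along `e 1, …, e l` gives
`β (f (x + v*) - f x) ≤ ∑ j, (f (x + e j) - f x)`, and `f v* ≤ f (x + v*)` by monotonicity,
so the largest of the `l` gains is at least `β / l` times `f v* - f x`.
-/

open Finset

/-- `f` has DR-submodularity ratio at least `β` in the direction `d`. -/
def DiminishingReturnsAlong {E : Type*} [AddCommMonoid E] [PartialOrder E]
    (f : E → ℝ) (β : ℝ) (d : E) : Prop :=
  ∀ x y, 0 ≤ x → x ≤ y → β * (f (y + d) - f y) ≤ f (x + d) - f x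

section OrderedMonoid

variable {E ι : Type*} [AddCommMonoid E] [PartialOrder E] [IsOrderedAddMonoid E]
  {f : E → ℝ} {β : ℝ}

theorem diminishingReturnsAlong_sum {s : Finset ι} {u : ι → E} (hu : ∀ i ∈ s, 0 ≤ u i)
    (hf : ∀ i ∈ s, DiminishingReturnsAlong f β (u i)) :
    DiminishingReturnsAlong f β (∑ i ∈ s, u i) := by
  classical
  induction s using Finset.induction_on with
  | empty => intro x y _ _; simp
  | @insert j s hj ih =>
    intro x y hx hxy
    have hS : 0 ≤ ∑ i ∈ s, u i := sum_nonneg fun i hi => hu i (mem_insert_of_mem hi)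
    have hstep := hf j (mem_insert_self j s) (x + ∑ i ∈ s, u i) (y + ∑ i ∈ s, u i)
      (add_nonneg hx hS) (add_le_add_left hxy _)
    have hrest := ih (fun i hi => hu i (mem_insert_of_mem hi))
      (fun i hi => hf i (mem_insert_of_mem hi)) x y hx hxy
    rw [sum_insert hj, add_comm (u j), ← add_assoc, ← add_assoc]
    linarith

theorem mul_sub_le_sum_of_diminishingReturnsAlong {s : Finset ι} {u : ι → E} {x : E}
    (hx : 0 ≤ x) (hu : ∀ i ∈ s, 0 ≤ u i) (hf : ∀ i ∈ s, DiminishingReturnsAlong f β (u i)) :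
    β * (f (x + ∑ i ∈ s, u i) - f x) ≤ ∑ i ∈ s, (f (x + u i) - f x) := by
  classical
  induction s using Finset.induction_on with
  | empty => simp
  | @insert j s hj ih =>
    have hS : 0 ≤ ∑ i ∈ s, u i := sum_nonneg fun i hi => hu i (mem_insert_of_mem hi)
    have hstep := hf j (mem_insert_self j s) x (x + ∑ i ∈ s, u i) hx (le_add_of_nonneg_right hS)
    have hrest := ih (fun i hi => hu i (mem_insert_of_mem hi))
      (fun i hi => hf i (mem_insert_of_mem hi))
    rw [sum_insert hj, sum_insert hj, add_comm (u j), ← add_assoc]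
    linarith

end OrderedMonoid

theorem diminishingReturnsAlong_of_nonneg {ι : Type*} [Fintype ι] [DecidableEq ι]
    {f : (ι → ℝ) → ℝ} {β : ℝ}
    (hDR : ∀ x y : ι → ℝ, 0 ≤ x → x ≤ y → ∀ k : ℝ, 0 ≤ k → ∀ i : ι,
      f (x + k • (Pi.single i 1 : ι → ℝ)) - f x ≥ β * (f (y + k • (Pi.single i 1 : ι → ℝ)) - f y))
    {d : ι → ℝ} (hd : 0 ≤ d) : DiminishingReturnsAlong f β d := by
  have hsingle (i : ι) : Pi.single i (d i) = d i • (Pi.single i 1 : ι → ℝ) := by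
    rw [← Pi.single_smul', smul_eq_mul, mul_one]
  rw [← univ_sum_single d]
  refine diminishingReturnsAlong_sum (fun i _ => Pi.single_nonneg.mpr (hd i)) fun i _ => ?_
  rw [hsingle]
  exact fun x y hx hxy => hDR x y hx hxy (d i) (hd i) i

theorem stmt_4_general {n : ℕ} (f : (Fin n → ℝ) → ℝ) (β : ℝ) (hβ0 : 0 < β)
    (hmono : ∀ x y : Fin n → ℝ, 0 ≤ x → x ≤ y → f x ≤ f y)
    (hDR : ∀ x y : Fin n → ℝ, 0 ≤ x → x ≤ y → ∀ k : ℝ, 0 ≤ k → ∀ i : Fin n,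
      f (x + k • (Pi.single i 1 : Fin n → ℝ)) - f x ≥ β * (f (y + k • (Pi.single i 1 : Fin n → ℝ)) - f y))
    (E : Set (Fin n → ℝ)) (hE : ∀ e ∈ E, 0 ≤ e)
    (l : ℕ) (hl : 0 < l)
    (e : Fin l → Fin n → ℝ) (he : ∀ j, e j ∈ E)
    (x : Fin n → ℝ) (hx : 0 ≤ x) :
    ∃ j : Fin l, f (x + e j) - f x ≥ (β / l) * (f (∑ j, e j) - f x) := by
  have he0 (j : Fin l) : 0 ≤ e j := hE _ (he j)
  have hgain : β * (f (∑ j, e j) - f x) ≤ ∑ j, (f (x + e j) - f x) := calc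
    β * (f (∑ j, e j) - f x) ≤ β * (f (x + ∑ j, e j) - f x) := by
      gcongr
      exact hmono _ _ (sum_nonneg fun j _ => he0 j) (le_add_of_nonneg_left hx)
    _ ≤ ∑ j, (f (x + e j) - f x) := mul_sub_le_sum_of_diminishingReturnsAlong hx
      (fun j _ => he0 j) fun j _ => diminishingReturnsAlong_of_nonneg hDR (he0 j)
  have hmean : ∑ _j : Fin l, β / l * (f (∑ j, e j) - f x) = β * (f (∑ j, e j) - f x) := by
    rw [sum_const, card_univ, Fintype.card_fin, nsmul_eq_mul]
    field_simp
  obtain ⟨j, -, hj⟩ := exists_le_of_sum_le (univ_nonempty_iff.mpr ⟨⟨0, hl⟩⟩) (hmean ▸ hgain)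
  exact ⟨j, hj⟩

/-- Lemma 2: if `v* = e 1 + ⋯ + e l` with each `e j` a nonnegative member of `𝓔`,
then for any nonnegative `x` some `e j` brings an improvement proportional to the
current distance to `f v*`. -/
theorem stmt_4 {n : ℕ} (f : (Fin n → ℝ) → ℝ) (β : ℝ) (hβ0 : 0 < β) (hβ1 : β ≤ 1)
    (hmono : ∀ x y : Fin n → ℝ, 0 ≤ x → x ≤ y → f x ≤ f y)
    (hDR : ∀ x y : Fin n → ℝ, 0 ≤ x → x ≤ y → ∀ k : ℝ, 0 ≤ k → ∀ i : Fin n,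
      f (x + k • (Pi.single i 1 : Fin n → ℝ)) - f x ≥ β * (f (y + k • (Pi.single i 1 : Fin n → ℝ)) - f y))
    (E : Set (Fin n → ℝ)) (hE : ∀ e ∈ E, 0 ≤ e)
    (l : ℕ) (hl : 0 < l)
    (e : Fin l → Fin n → ℝ) (he : ∀ j, e j ∈ E)
    (x : Fin n → ℝ) (hx : 0 ≤ x) :
    ∃ j : Fin l, f (x + e j) - f x ≥ (β / l) * (f (∑ j, e j) - f x) :=
  stmt_4_general f β hβ0 hmono hDR E hE l hl e he x hx
end

section
/- (Lemma 3) Let P ⊆ ℝ^n be a convex set. Let x_1, …, x_m ∈ P and let θ_1, …, θ_m be strictly positive reals with θ_1 + ⋯ + θ_m = 1. If the point x' = θ_1·x_1 + ⋯ + θ_m·x_m belongs to Frontier(P), then the convex hull of {x_1, …, x_m} is contained in Frontier(P). -/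
/-!
The maximal elements of a convex set `P` form an extreme subset of `P`: if an interior point of
a segment in `P` is maximal, so are its endpoints, since moving an endpoint up moves that point
up. A convex combination `p` of the `x i` with strictly positive weights lies in the relative
interior of their convex hull, so every point `q` of the hull is an endpoint of a segment in the
hull through `p`; hence `q` is maximal as soon as `p` is.
-/

def maxFrontier {n : ℕ} (S : Set (Fin n → ℝ)) : Set (Fin n → ℝ) :=
  {x | x ∈ S ∧ ¬ ∃ y ∈ S, x ≤ y ∧ x ≠ y}

open Set Filter Topology

theorem convexHull_range_eq_image_stdSimplex {𝕜 E ι : Type*} [Field 𝕜] [LinearOrder 𝕜]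
    [IsStrictOrderedRing 𝕜] [AddCommGroup E] [Module 𝕜 E] [Fintype ι] (x : ι → E) :
    convexHull 𝕜 (range x) = Fintype.linearCombination 𝕜 x '' stdSimplex 𝕜 ι := by
  classical
  rw [← convexHull_basis_eq_stdSimplex, LinearMap.image_convexHull, ← range_comp]
  congr
  funext i
  simp [Fintype.linearCombination_apply, ite_smul]

theorem exists_mem_openSegment_of_pos_weights {E ι : Type*} [AddCommGroup E] [Module ℝ E]
    [Fintype ι] (x : ι → E) {θ c : ι → ℝ} (hθ : ∀ i, 0 < θ i) (hθ₁ : ∑ i, θ i = 1)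
    (hc : c ∈ stdSimplex ℝ ι) :
    ∃ r ∈ convexHull ℝ (range x), ∑ i, θ i • x i ∈ openSegment ℝ (∑ i, c i • x i) r := by
  -- Any `0 < t < 1` below all `θ i` works: `r` gets the weights `(θ i - t * c i) / (1 - t) ≥ 0`.
  obtain ⟨t, ht₀, ht₁, htθ⟩ : ∃ t : ℝ, 0 < t ∧ t < 1 ∧ ∀ i, t < θ i :=
    (eventually_mem_nhdsWithin.and (nhdsWithin_le_nhds <| (eventually_lt_nhds one_pos).and <|
      eventually_all.2 fun i => eventually_lt_nhds (hθ i)) : ∀ᶠ t in 𝓝[>] (0 : ℝ), _).exists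
  have h1t : 0 < 1 - t := sub_pos.2 ht₁
  set w : ι → ℝ := fun i => (θ i - t * c i) / (1 - t)
  have hw₀ : ∀ i, 0 ≤ w i := fun i => div_nonneg (by
    nlinarith [mul_le_of_le_one_right ht₀.le (mem_Icc_of_mem_stdSimplex hc i).2, htθ i]) h1t.le
  have hw₁ : ∑ i, w i = 1 := by
    rw [← Finset.sum_div, Finset.sum_sub_distrib, ← Finset.mul_sum, hθ₁, hc.2, mul_one,
      div_self h1t.ne']
  refine ⟨∑ i, w i • x i, mem_convexHull_of_exists_fintype w x hw₀ hw₁ (mem_range_self ·) rfl,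
    t, 1 - t, ht₀, h1t, by ring, ?_⟩
  simp only [Finset.smul_sum, smul_smul, ← Finset.sum_add_distrib, ← add_smul]
  refine Finset.sum_congr rfl fun i _ => ?_
  congr 1
  simp only [w]
  field_simp
  ring

theorem isExtreme_maxFrontier {n : ℕ} {P : Set (Fin n → ℝ)} (hP : Convex ℝ P) :
    IsExtreme ℝ P (maxFrontier P) := by
  constructor
  · exact fun _ h => h.1
  rintro x hx y hy _ hz ⟨a, b, ha, hb, hab, rfl⟩
  refine ⟨hx, fun ⟨x', hx', hle, hne⟩ => hz.2 ⟨a • x' + b • y, hP hx' hy ha.le hb.le hab, ?_, ?_⟩⟩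
  · gcongr
  · intro h
    exact hne (smul_right_injective _ ha.ne' (add_right_cancel h))

/-- Lemma 3: if a strictly positive convex combination of points of a convex set `P`
lies in `Frontier(P)`, then the whole convex hull of those points lies in
`Frontier(P)`. -/
theorem stmt_5 {n m : ℕ} (P : Set (Fin n → ℝ)) (hP : Convex ℝ P)
    (x : Fin m → Fin n → ℝ) (hx : ∀ i, x i ∈ P)
    (θ : Fin m → ℝ) (hθ : ∀ i, 0 < θ i) (hsum : ∑ i, θ i = 1)
    (hfront : (∑ i, θ i • x i) ∈ maxFrontier P) :
    convexHull ℝ (Set.range x) ⊆ maxFrontier P := by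
  have hhull : convexHull ℝ (range x) ⊆ P := hP.convexHull_subset_iff.2 (range_subset_iff.2 hx)
  intro q hq
  obtain ⟨c, hc, rfl⟩ := (convexHull_range_eq_image_stdSimplex x).le hq
  obtain ⟨r, hr, hseg⟩ := exists_mem_openSegment_of_pos_weights x hθ hsum hc
  exact (isExtreme_maxFrontier hP).left_mem_of_mem_openSegment (hhull hq) (hhull hr) hfront hseg
end

section
/- (Lemma 4) Let E ⊆ ℝ^n be a finite nonempty set of nonnegative vectors, P = conv(E) its convex hull, l a positive integer, 𝓔 = {(1/l)·x : x ∈ Frontier(E)}, and m = |Frontier(E)|. Let D ≥ 0 satisfy ‖x‖ ≤ D for all x ∈ P, and let x* ∈ Frontier(P). Then there exist e'_1, …, e'_l ∈ 𝓔 (repetitions allowed) such that v' = e'_1 + ⋯ + e'_l belongs to Frontier(P) and ‖x* − v'‖ ≤ m·D/l. -/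
/-- Euclidean norm on `Fin n → ℝ`. -/
noncomputable def enorm {n : ℕ} (x : Fin n → ℝ) : ℝ :=
  Real.sqrt (∑ i, (x i) ^ 2)

open Finset

lemma enorm_eq_norm_toLp {n : ℕ} (x : Fin n → ℝ) : _root_.enorm x = ‖WithLp.toLp 2 x‖ := by
  simp [_root_.enorm, EuclideanSpace.norm_eq]

lemma enorm_sum_smul_le {n : ℕ} {ι : Type*} [Fintype ι] (c : ι → ℝ) (f : ι → Fin n → ℝ)
    {δ D : ℝ} (hc : ∀ i, |c i| ≤ δ) (hf : ∀ i, _root_.enorm (f i) ≤ D) :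
    _root_.enorm (∑ i, c i • f i) ≤ Fintype.card ι * (δ * D) := by
  simp only [enorm_eq_norm_toLp] at hf ⊢
  calc ‖WithLp.toLp 2 (∑ i, c i • f i)‖ ≤ ∑ i, ‖c i • WithLp.toLp 2 (f i)‖ := by
        simpa only [WithLp.toLp_sum, WithLp.toLp_smul] using norm_sum_le _ _
    _ ≤ ∑ _i : ι, δ * D := by
        gcongr with i
        rw [norm_smul, Real.norm_eq_abs]
        exact mul_le_mul (hc i) (hf i) (norm_nonneg _) ((abs_nonneg _).trans (hc i))
    _ = Fintype.card ι * (δ * D) := by simp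

lemma mem_maxFrontier_of_subset {n : ℕ} {E P : Set (Fin n → ℝ)} (hEP : E ⊆ P) {x : Fin n → ℝ}
    (hxE : x ∈ E) (hxP : x ∈ maxFrontier P) : x ∈ maxFrontier E :=
  ⟨hxE, fun ⟨y, hyE, hxy⟩ => hxP.2 ⟨y, hEP hyE, hxy⟩⟩

lemma sum_smul_mem_maxFrontier {n : ℕ} {P : Set (Fin n → ℝ)} (hP : Convex ℝ P)
    {ι : Type*} [Fintype ι] {f : ι → Fin n → ℝ} (hfP : ∀ i, f i ∈ P)
    {w : ι → ℝ} (hw0 : ∀ i, 0 < w i) (hw1 : ∑ i, w i = 1)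
    (hx : ∑ i, w i • f i ∈ maxFrontier P)
    {μ : ι → ℝ} (hμ0 : ∀ i, 0 ≤ μ i) (hμ1 : ∑ i, μ i = 1) :
    ∑ i, μ i • f i ∈ maxFrontier P := by
  set x := ∑ i, w i • f i
  set y := ∑ i, μ i • f i
  refine ⟨hP.sum_mem (fun i _ => hμ0 i) hμ1 (fun i _ => hfP i), ?_⟩
  rintro ⟨z, hzP, hyz, hyz_ne⟩
  obtain ⟨i₀, -, hi₀⟩ := univ.exists_min_image w (nonempty_of_sum_ne_zero (hw1 ▸ one_ne_zero))
  set ε := w i₀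
  have hε : 0 < ε := hw0 i₀
  have hεμ : ∀ i, ε * μ i ≤ w i := fun i => by
    have : μ i ≤ 1 := hμ1 ▸ single_le_sum (fun j _ => hμ0 j) (mem_univ i)
    nlinarith [hw0 i₀, hi₀ i (mem_univ i)]
  -- `x - ε • y` still has nonnegative coefficients, so moving `x` by `ε • (z - y)` stays in `P`
  have hmem : x + ε • (z - y) ∈ P := by
    have := hP.sum_mem (t := univ) (w := fun o : Option ι => o.elim ε fun i => w i - ε * μ i)
      (z := fun o : Option ι => o.elim z f) (by rintro (_ | i) - <;> simp [hε.le, hεμ])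
      (by simp [Fintype.sum_option, sum_sub_distrib, ← mul_sum, hw1, hμ1])
      (by rintro (_ | i) - <;> simp [hzP, hfP])
    convert this using 1
    simp only [Fintype.sum_option, Option.elim, sub_smul, sum_sub_distrib, mul_smul, ← smul_sum]
    simp only [x, y, smul_sub]
    abel
  refine hx.2 ⟨x + ε • (z - y), hmem, le_add_of_nonneg_right ?_, ?_⟩
  · exact smul_nonneg hε.le (sub_nonneg.2 hyz)
  · simpa [sub_eq_zero] using ⟨hε.ne', hyz_ne.symm⟩

lemma exists_nat_sum_eq_abs_sub_le_one {ι : Type*} [Fintype ι] (a : ι → ℝ) (ha : ∀ i, 0 ≤ a i)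
    {N : ℕ} (hN : ∑ i, a i = N) : ∃ k : ι → ℕ, ∑ i, k i = N ∧ ∀ i, |(k i : ℝ) - a i| ≤ 1 := by
  classical
  set F : ι → ℕ := fun i => ⌊a i⌋₊
  have hF_le : ∀ i, (F i : ℝ) ≤ a i := fun i => Nat.floor_le (ha i)
  have hF_lt : ∀ i, a i < F i + 1 := fun i => Nat.lt_floor_add_one _
  have hsum_le : ∑ i, F i ≤ N := by
    exact_mod_cast hN ▸ (sum_le_sum fun i _ => hF_le i : ∑ i, (F i : ℝ) ≤ ∑ i, a i)
  have hN_le : N ≤ ∑ i, F i + Fintype.card ι := by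
    have : ∑ i, a i ≤ ∑ i, ((F i : ℝ) + 1) := sum_le_sum fun i _ => (hF_lt i).le
    rw [hN, sum_add_distrib] at this
    exact_mod_cast (by simpa using this : (N : ℝ) ≤ ∑ i, (F i : ℝ) + Fintype.card ι)
  obtain ⟨R, -, hR⟩ := exists_subset_card_eq (s := (univ : Finset ι)) (n := N - ∑ i, F i)
    (by rw [card_univ]; omega)
  refine ⟨fun i => F i + if i ∈ R then 1 else 0, ?_, fun i => abs_le.2 ?_⟩
  · rw [sum_add_distrib, sum_ite_mem, univ_inter, sum_const, hR, smul_eq_mul, mul_one]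
    omega
  · have := hF_le i; have := hF_lt i
    dsimp only
    split_ifs <;> push_cast <;> constructor <;> linarith

lemma exists_nat_sum_eq_abs_sub_div_le {ι : Type*} [Fintype ι] (w : ι → ℝ) (hw0 : ∀ i, 0 ≤ w i)
    (hw1 : ∑ i, w i = 1) {l : ℕ} (hl : 0 < l) :
    ∃ k : ι → ℕ, ∑ i, k i = l ∧ ∀ i, |w i - k i / l| ≤ 1 / l := by
  have hl' : (0 : ℝ) < l := Nat.cast_pos.2 hl
  obtain ⟨k, hk, hkw⟩ := exists_nat_sum_eq_abs_sub_le_one (fun i => l * w i)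
    (fun i => mul_nonneg hl'.le (hw0 i)) (by rw [← mul_sum, hw1, mul_one])
  refine ⟨k, hk, fun i => ?_⟩
  rw [show w i - k i / l = -(k i - l * w i) / l by field_simp; ring, abs_div, abs_neg,
    abs_of_pos hl']
  exact div_le_div_of_nonneg_right (hkw i) hl'.le

lemma exists_fin_tuple_sum_eq_sum_nsmul {ι : Type*} [Fintype ι] {M : Type*} [AddCommMonoid M]
    (k : ι → ℕ) {l : ℕ} (hk : ∑ i, k i = l) :
    ∃ c : Fin l → ι, ∀ g : ι → M, ∑ j, g (c j) = ∑ i, k i • g i := by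
  let σ : (Σ i, Fin (k i)) ≃ Fin l := Fintype.equivFinOfCardEq (by simpa using hk)
  refine ⟨fun j => (σ.symm j).1, fun g => ?_⟩
  rw [σ.symm.sum_comp (fun p => g p.1), ← univ_sigma_univ, sum_sigma]
  simp

theorem stmt_7_general {n : ℕ} (E : Set (Fin n → ℝ)) (hfin : E.Finite)
    (l : ℕ) (hl : 0 < l)
    (m : ℕ) (hm : m = (maxFrontier E).ncard)
    (D : ℝ) (hD : 0 ≤ D) (hDb : ∀ x ∈ convexHull ℝ E, _root_.enorm x ≤ D)
    (xstar : Fin n → ℝ) (hxs : xstar ∈ maxFrontier (convexHull ℝ E)) :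
    ∃ e' : Fin l → Fin n → ℝ,
      (∀ j, e' j ∈ (fun v : Fin n → ℝ => (l : ℝ)⁻¹ • v) '' maxFrontier E) ∧
      (∑ j, e' j) ∈ maxFrontier (convexHull ℝ E) ∧
      _root_.enorm (xstar - ∑ j, e' j) ≤ m * D / l := by
  classical
  obtain ⟨ι, _, z, w, hzE, hz_indep, hw0, hw1, rfl⟩ := eq_pos_convex_span_of_mem_convexHull hxs.1
  have hzP : ∀ i, z i ∈ convexHull ℝ E := fun i => subset_convexHull ℝ E (hzE ⟨i, rfl⟩)
  have hfront : ∀ μ : ι → ℝ, (∀ i, 0 ≤ μ i) → ∑ i, μ i = 1 →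
      ∑ i, μ i • z i ∈ maxFrontier (convexHull ℝ E) :=
    fun μ => sum_smul_mem_maxFrontier (convex_convexHull ℝ E) hzP hw0 hw1 hxs
  have hzF : ∀ i, z i ∈ maxFrontier E := fun i =>
    mem_maxFrontier_of_subset (subset_convexHull ℝ E) (hzE ⟨i, rfl⟩) <| by
      simpa [Pi.single_apply] using hfront (Pi.single i 1) (Pi.single_nonneg.2 zero_le_one :
        (0 : ι → ℝ) ≤ Pi.single i 1) (by simp)
  have hcard : Fintype.card ι ≤ m := by
    rw [hm, Fintype.card_eq_nat_card, ← Set.ncard_range_of_injective hz_indep.injective]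
    exact Set.ncard_le_ncard (Set.range_subset_iff.2 hzF) (hfin.subset fun _ hx => hx.1)
  obtain ⟨k, hk, hkw⟩ := exists_nat_sum_eq_abs_sub_div_le w (fun i => (hw0 i).le) hw1 hl
  obtain ⟨c, hc⟩ := exists_fin_tuple_sum_eq_sum_nsmul (M := Fin n → ℝ) k hk
  have hv : ∑ j, (l : ℝ)⁻¹ • z (c j) = ∑ i, ((k i : ℝ) / l) • z i := by
    simp only [hc fun i => (l : ℝ)⁻¹ • z i, div_eq_mul_inv, mul_smul, Nat.cast_smul_eq_nsmul]
  refine ⟨fun j => (l : ℝ)⁻¹ • z (c j), fun j => ⟨_, hzF _, rfl⟩, ?_, ?_⟩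
  · rw [hv]
    refine hfront _ (fun i => by positivity) ?_
    rw [← sum_div, ← Nat.cast_sum, hk, div_self (Nat.cast_pos.2 hl).ne']
  · rw [hv, ← sum_sub_distrib]
    simp_rw [← sub_smul]
    calc _ ≤ Fintype.card ι * (1 / l * D) := enorm_sum_smul_le _ _ hkw fun i => hDb _ (hzP i)
      _ ≤ m * D / l := by
          rw [← mul_assoc, mul_one_div, div_mul_eq_mul_div]
          gcongr

/-- Lemma 4: any `x* ∈ Frontier(conv E)` can be approximated within `m·D/l` by a sum
`v'` of `l` elements of `𝓔 = (1/l)·Frontier(E)` with `v' ∈ Frontier(conv E)`. -/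
theorem stmt_7 {n : ℕ} (E : Set (Fin n → ℝ)) (hfin : E.Finite) (hne : E.Nonempty)
    (hpos : ∀ v ∈ E, 0 ≤ v)
    (l : ℕ) (hl : 0 < l)
    (m : ℕ) (hm : m = (maxFrontier E).ncard)
    (D : ℝ) (hD : 0 ≤ D) (hDb : ∀ x ∈ convexHull ℝ E, _root_.enorm x ≤ D)
    (xstar : Fin n → ℝ) (hxs : xstar ∈ maxFrontier (convexHull ℝ E)) :
    ∃ e' : Fin l → Fin n → ℝ,
      (∀ j, e' j ∈ (fun v : Fin n → ℝ => (l : ℝ)⁻¹ • v) '' maxFrontier E) ∧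
      (∑ j, e' j) ∈ maxFrontier (convexHull ℝ E) ∧
      _root_.enorm (xstar - ∑ j, e' j) ≤ m * D / l :=
  stmt_7_general E hfin l hl m hm D hD hDb xstar hxs
end

section
/- (Lemma on the generalized-greedy step of LDGM-G) Let f : ℝ^n → ℝ be monotone on the nonnegative orthant with submodularity ratio at least α, where 0 < α ≤ 1. Let e_1, …, e_m ∈ ℝ^n be nonzero nonnegative vectors that are pairwise orthogonal, let l be a positive integer, and let c_1, …, c_m and d_1, …, d_m be natural numbers with d_1 + ⋯ + d_m = l. Set x = Σ_i c_i·e_i and v* = Σ_i d_i·e_i. Suppose i₀ ∈ {1, …, m} and k is an integer with 1 ≤ k ≤ l − c_{i₀} such that for every i ∈ {1, …, m} and every integer j with 1 ≤ j ≤ l − c_i one has (f(x + k·e_{i₀}) − f(x))/k ≥ (f(x + j·e_i) − f(x))/j. Then (f(x + k·e_{i₀}) − f(x))/k ≥ (α/l)·(f(v*) − f(x)). -/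
/-! Write `j i = d i - c i` (truncated). By monotonicity `f v ≤ f (x + ∑ j i • e i)`, and because
the `e i` have disjoint supports, the submodularity ratio splits the gain of this joint move into
single-direction gains: `α (f (x + ∑ j i • e i) - f x) ≤ ∑ (f (x + j i • e i) - f x)`. Every step
`j i • e i` is feasible, so the greedy choice bounds its gain by `j i` times the chosen rate, and
`∑ j i ≤ ∑ d i = l`. -/

open Finset

theorem Pi.mul_eq_zero_of_sum_mul_eq_zero {ι : Type*} [Fintype ι] {a b : ι → ℝ}
    (ha : 0 ≤ a) (hb : 0 ≤ b) (h : ∑ t, a t * b t = 0) : a * b = 0 :=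
  funext fun t =>
    (sum_eq_zero_iff_of_nonneg fun t _ => mul_nonneg (ha t) (hb t)).1 h t (mem_univ t)

def SubmodularityRatioAtLeast {ι : Type*} [DecidableEq ι] (f : (ι → ℝ) → ℝ) (α : ℝ) :
    Prop :=
  ∀ x y : ι → ℝ, 0 ≤ x → x ≤ y → ∀ i : ι, x i = y i → ∀ k : ℝ, 0 ≤ k →
    f (x + k • (Pi.single i 1 : ι → ℝ)) - f x ≥
      α * (f (y + k • (Pi.single i 1 : ι → ℝ)) - f y)

namespace SubmodularityRatioAtLeast

variable {ι : Type*} [DecidableEq ι] {f : (ι → ℝ) → ℝ} {α : ℝ}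

theorem mul_sub_le_single (hf : SubmodularityRatioAtLeast f α) {x y : ι → ℝ} (hx : 0 ≤ x)
    (hxy : x ≤ y) {i : ι} (hi : x i = y i) {k : ℝ} (hk : 0 ≤ k) :
    α * (f (y + Pi.single i k) - f y) ≤ f (x + Pi.single i k) - f x := by
  simpa [← Pi.single_smul'] using hf x y hx hxy i hi k hk

theorem mul_sub_le_of_eq_of_ne_zero [Fintype ι] (hf : SubmodularityRatioAtLeast f α)
    {x y w : ι → ℝ} (hx : 0 ≤ x) (hxy : x ≤ y) (hw : 0 ≤ w)
    (hwxy : ∀ s, w s ≠ 0 → x s = y s) :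
    α * (f (y + w) - f y) ≤ f (x + w) - f x := by
  suffices key : ∀ S : Finset ι, α * (f (y + ∑ s ∈ S, Pi.single s (w s)) - f y) ≤
      f (x + ∑ s ∈ S, Pi.single s (w s)) - f x by
    simpa only [Finset.univ_sum_single] using key univ
  intro S
  induction S using Finset.induction_on with
  | empty => simp
  | @insert a S ha ih =>
    set g := ∑ s ∈ S, Pi.single s (w s)
    have hg : 0 ≤ g := sum_nonneg fun s _ => Pi.single_nonneg.2 (hw s)
    rw [sum_insert ha, add_comm _ g, ← add_assoc, ← add_assoc]
    by_cases hwa : w a = 0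
    · simpa [hwa] using ih
    have step := hf.mul_sub_le_single (x := x + g) (y := y + g) (i := a) (add_nonneg hx hg)
      (add_le_add_left hxy g) (by simp [hwxy a hwa]) (hw a)
    linarith

theorem mul_sub_le_sum_of_pairwise_mul_eq_zero [Fintype ι] (hf : SubmodularityRatioAtLeast f α)
    {κ : Type*} {x : ι → ℝ} (hx : 0 ≤ x) {u : κ → ι → ℝ} (hu : ∀ i, 0 ≤ u i)
    (hdisj : Pairwise fun i j => u i * u j = 0) (S : Finset κ) :
    α * (f (x + ∑ i ∈ S, u i) - f x) ≤ ∑ i ∈ S, (f (x + u i) - f x) := by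
  classical
  induction S using Finset.induction_on with
  | empty => simp
  | @insert a S ha ih =>
    set g := ∑ i ∈ S, u i
    have hg : 0 ≤ g := sum_nonneg fun i _ => hu i
    have hg_eq_zero : ∀ s, u a s ≠ 0 → g s = 0 := fun s hs => by
      refine (sum_apply s S u).trans (sum_eq_zero fun i hi => ?_)
      exact (mul_eq_zero.1 (congrFun (hdisj (ne_of_mem_of_not_mem hi ha).symm) s)).resolve_left hs
    have step := hf.mul_sub_le_of_eq_of_ne_zero hx (le_add_of_nonneg_right hg) (hu a)
      fun s hs => by simp [hg_eq_zero s hs]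
    rw [sum_insert ha, sum_insert ha, add_comm (u a) g, ← add_assoc]
    linarith

theorem mul_sub_le_sum_sub_tsub [Fintype ι] {κ : Type*} [Fintype κ]
    (hf : SubmodularityRatioAtLeast f α) (hmono : MonotoneOn f (Set.Ici 0)) (hα : 0 ≤ α)
    {e : κ → ι → ℝ} (he : ∀ i, 0 ≤ e i) (hdisj : Pairwise fun i j => e i * e j = 0)
    {c d : κ → ℕ} {x v : ι → ℝ} (hx : x = ∑ i, (c i : ℝ) • e i)
    (hv : v = ∑ i, (d i : ℝ) • e i) :
    α * (f v - f x) ≤ ∑ i, (f (x + ((d i - c i : ℕ) : ℝ) • e i) - f x) := by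
  have hcomb_nonneg (a : κ → ℕ) : 0 ≤ ∑ i, (a i : ℝ) • e i :=
    sum_nonneg fun i _ => smul_nonneg (Nat.cast_nonneg _) (he i)
  have hv_le : v ≤ x + ∑ i, ((d i - c i : ℕ) : ℝ) • e i := by
    rw [hv, hx, ← sum_add_distrib]
    refine sum_le_sum fun i _ => ?_
    rw [← add_smul]
    exact smul_le_smul_of_nonneg_right (by norm_cast; omega) (he i)
  calc α * (f v - f x) ≤ α * (f (x + ∑ i, ((d i - c i : ℕ) : ℝ) • e i) - f x) := by
        gcongr
        exact hmono (hv ▸ hcomb_nonneg d) (le_trans (hv ▸ hcomb_nonneg d) hv_le) hv_le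
    _ ≤ _ := hf.mul_sub_le_sum_of_pairwise_mul_eq_zero (hx ▸ hcomb_nonneg c)
        (fun i => smul_nonneg (Nat.cast_nonneg _) (he i))
        (fun i j hij => by simp only [smul_mul_smul_comm, hdisj hij, smul_zero]) univ

end SubmodularityRatioAtLeast

theorem stmt_9_general {n m : ℕ} (f : (Fin n → ℝ) → ℝ) (α : ℝ) (hα0 : 0 < α)
    (hmono : ∀ x y : Fin n → ℝ, 0 ≤ x → x ≤ y → f x ≤ f y)
    (hsub : ∀ x y : Fin n → ℝ, 0 ≤ x → x ≤ y → ∀ i : Fin n, x i = y i →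
      ∀ k : ℝ, 0 ≤ k →
      f (x + k • (Pi.single i 1 : Fin n → ℝ)) - f x ≥ α * (f (y + k • (Pi.single i 1 : Fin n → ℝ)) - f y))
    (e : Fin m → Fin n → ℝ) (hpos : ∀ i, 0 ≤ e i)
    (horth : ∀ i j, i ≠ j → (∑ t, e i t * e j t) = 0)
    (l : ℕ) (hl : 0 < l)
    (c d : Fin m → ℕ) (hd : ∑ i, d i = l)
    (x v : Fin n → ℝ)
    (hx : x = ∑ i, (c i : ℝ) • e i) (hv : v = ∑ i, (d i : ℝ) • e i)
    (i0 : Fin m) (k : ℕ)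
    (hbest : ∀ i : Fin m, ∀ j : ℕ, 1 ≤ j → j + c i ≤ l →
      (f (x + (k : ℝ) • e i0) - f x) / k ≥ (f (x + (j : ℝ) • e i) - f x) / j) :
    (f (x + (k : ℝ) • e i0) - f x) / k ≥ (α / l) * (f v - f x) := by
  set G := (f (x + (k : ℝ) • e i0) - f x) / k
  have hx0 : 0 ≤ x := hx ▸ sum_nonneg fun i _ => smul_nonneg (Nat.cast_nonneg _) (hpos i)
  have hG : 0 ≤ G := div_nonneg (sub_nonneg.2 (hmono _ _ hx0
    (le_add_of_nonneg_right (smul_nonneg (Nat.cast_nonneg _) (hpos i0))))) (Nat.cast_nonneg _)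
  have hdir (i : Fin m) : f (x + ((d i - c i : ℕ) : ℝ) • e i) - f x ≤ (d i - c i : ℕ) * G := by
    rcases Nat.eq_zero_or_pos (d i - c i) with hj0 | hj_pos
    · simp [hj0]
    have hdl : d i ≤ l := hd ▸ single_le_sum (fun i _ => Nat.zero_le _) (mem_univ i)
    have := hbest i (d i - c i) hj_pos (by omega)
    rwa [ge_iff_le, div_le_iff₀ (by positivity), mul_comm] at this
  have hsum : ∑ i, (d i - c i) ≤ l := hd ▸ sum_le_sum fun i _ => Nat.sub_le _ _
  have key : α * (f v - f x) ≤ l * G := calc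
    α * (f v - f x) ≤ ∑ i, (f (x + ((d i - c i : ℕ) : ℝ) • e i) - f x) :=
      SubmodularityRatioAtLeast.mul_sub_le_sum_sub_tsub hsub
        (fun a ha b _ hab => hmono a b ha hab) hα0.le hpos
        (fun i j hij => Pi.mul_eq_zero_of_sum_mul_eq_zero (hpos i) (hpos j) (horth i j hij)) hx hv
    _ ≤ ∑ i, ((d i - c i : ℕ) : ℝ) * G := sum_le_sum fun i _ => hdir i
    _ ≤ l * G := by
      rw [← sum_mul]
      gcongr
      exact_mod_cast hsum
  rw [ge_iff_le, div_mul_eq_mul_div, div_le_iff₀ (by positivity)]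
  linarith

/-- Lemma on the generalized-greedy step of LDGM-G for (weakly) submodular
functions over pairwise-orthogonal directions. -/
theorem stmt_9 {n m : ℕ} (f : (Fin n → ℝ) → ℝ) (α : ℝ) (hα0 : 0 < α) (hα1 : α ≤ 1)
    (hmono : ∀ x y : Fin n → ℝ, 0 ≤ x → x ≤ y → f x ≤ f y)
    (hsub : ∀ x y : Fin n → ℝ, 0 ≤ x → x ≤ y → ∀ i : Fin n, x i = y i →
      ∀ k : ℝ, 0 ≤ k →
      f (x + k • (Pi.single i 1 : Fin n → ℝ)) - f x ≥ α * (f (y + k • (Pi.single i 1 : Fin n → ℝ)) - f y))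
    (e : Fin m → Fin n → ℝ) (hnz : ∀ i, e i ≠ 0) (hpos : ∀ i, 0 ≤ e i)
    (horth : ∀ i j, i ≠ j → (∑ t, e i t * e j t) = 0)
    (l : ℕ) (hl : 0 < l)
    (c d : Fin m → ℕ) (hd : ∑ i, d i = l)
    (x v : Fin n → ℝ)
    (hx : x = ∑ i, (c i : ℝ) • e i) (hv : v = ∑ i, (d i : ℝ) • e i)
    (i0 : Fin m) (k : ℕ) (hk1 : 1 ≤ k) (hk2 : k + c i0 ≤ l)
    (hbest : ∀ i : Fin m, ∀ j : ℕ, 1 ≤ j → j + c i ≤ l →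
      (f (x + (k : ℝ) • e i0) - f x) / k ≥ (f (x + (j : ℝ) • e i) - f x) / j) :
    (f (x + (k : ℝ) • e i0) - f x) / k ≥ (α / l) * (f v - f x) :=
  stmt_9_general f α hα0 hmono hsub e hpos horth l hl c d hd x v hx hv i0 k hbest
end

section
/- (Induction step in the proof of Theorem 2) Let l be a positive integer, 0 < α ≤ 1, and V ≥ 0. Let (k_s)_{s≥1} be positive integers with k_s ≤ l for all s, and let (b_s)_{s≥0} be a sequence of reals with b_0 ≥ 0 such that for all s ≥ 0, b_{s+1} ≥ (α·k_{s+1}/l)·V + (1 − α·k_{s+1}/l)·b_s. Then for every s ≥ 1, b_s ≥ (1 − (1 − α·(k_1 + ⋯ + k_s)/(s·l))^s)·V. -/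
/-!
Write `c i = α k_i / l ∈ (-∞, 1]`. The recursion says that the gap `V - b_s` shrinks at least
by the factor `1 - c_s` at each step, so `V - b_s ≤ ∏_{i ≤ s} (1 - c_i) · V`, and AM-GM bounds
this product of nonnegative factors by the `s`-th power of their mean `1 - α (∑ k_i) / (s l)`.
-/

open Finset

namespace Real

theorem prod_le_arith_mean_pow {ι : Type*} (s : Finset ι) {z : ι → ℝ} (hz : ∀ i ∈ s, 0 ≤ z i) :
    ∏ i ∈ s, z i ≤ ((∑ i ∈ s, z i) / #s) ^ #s := by
  rcases s.eq_empty_or_nonempty with rfl | hs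
  · simp
  have hcard : (0 : ℝ) < #s := by exact_mod_cast hs.card_pos
  have hgm := geom_mean_le_arith_mean s (fun _ ↦ 1) z (fun _ _ ↦ zero_le_one)
    (by simpa using hcard) hz
  simp only [rpow_one, sum_const, nsmul_eq_mul, mul_one, one_mul] at hgm
  calc ∏ i ∈ s, z i = ((∏ i ∈ s, z i) ^ ((#s : ℝ)⁻¹)) ^ #s :=
        (rpow_inv_natCast_pow (prod_nonneg hz) hs.card_pos.ne').symm
    _ ≤ ((∑ i ∈ s, z i) / #s) ^ #s := by gcongr; exact rpow_nonneg (prod_nonneg hz) _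

theorem prod_one_sub_le_one_sub_mean_pow {ι : Type*} (s : Finset ι) {x : ι → ℝ}
    (hx : ∀ i ∈ s, x i ≤ 1) :
    ∏ i ∈ s, (1 - x i) ≤ (1 - (∑ i ∈ s, x i) / #s) ^ #s := by
  rcases s.eq_empty_or_nonempty with rfl | hs
  · simp
  have hcard : (#s : ℝ) ≠ 0 := by exact_mod_cast hs.card_pos.ne'
  have hmean : (∑ i ∈ s, (1 - x i)) / #s = 1 - (∑ i ∈ s, x i) / #s := by
    rw [sum_sub_distrib, sum_const, nsmul_one, sub_div, div_self hcard]
  rw [← hmean]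
  exact prod_le_arith_mean_pow s fun i hi ↦ sub_nonneg.2 (hx i hi)

end Real

theorem le_prod_Icc_mul_of_le_mul {a r : ℕ → ℝ} (hr : ∀ n, 0 ≤ r (n + 1))
    (h : ∀ n, a (n + 1) ≤ r (n + 1) * a n) (n : ℕ) :
    a n ≤ (∏ i ∈ Icc 1 n, r i) * a 0 := by
  induction n with
  | zero => simp
  | succ n ih =>
    rw [prod_Icc_succ_top (Nat.le_add_left 1 n)]
    calc a (n + 1) ≤ r (n + 1) * a n := h n
      _ ≤ r (n + 1) * ((∏ i ∈ Icc 1 n, r i) * a 0) := mul_le_mul_of_nonneg_left ih (hr n)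
      _ = (∏ i ∈ Icc 1 n, r i) * r (n + 1) * a 0 := by ring

theorem stmt_10_general (l : ℕ) (α : ℝ) (hα1 : α ≤ 1)
    (V : ℝ) (hV : 0 ≤ V)
    (k : ℕ → ℕ) (hk : ∀ s, 1 ≤ s → 1 ≤ k s ∧ k s ≤ l)
    (b : ℕ → ℝ) (hb0 : 0 ≤ b 0)
    (hrec : ∀ s, b (s + 1) ≥ (α * (k (s + 1) : ℝ) / l) * V
      + (1 - α * (k (s + 1) : ℝ) / l) * b s) :
    ∀ s, 1 ≤ s →
      b s ≥ (1 - (1 - α * (∑ i ∈ Finset.Icc 1 s, (k i : ℝ)) / (s * l)) ^ s) * V := by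
  intro s _
  set c : ℕ → ℝ := fun i ↦ α * k i / l
  have hc : ∀ i, 1 ≤ i → c i ≤ 1 := fun i hi ↦ by
    refine div_le_one_of_le₀ ?_ (Nat.cast_nonneg l)
    calc α * k i ≤ 1 * k i := mul_le_mul_of_nonneg_right hα1 (Nat.cast_nonneg _)
      _ ≤ l := by rw [one_mul]; exact_mod_cast (hk i hi).2
  have hgap : V - b s ≤ (∏ i ∈ Icc 1 s, (1 - c i)) * (V - b 0) :=
    le_prod_Icc_mul_of_le_mul (a := fun n ↦ V - b n) (r := fun i ↦ 1 - c i)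
      (fun n ↦ sub_nonneg.2 (hc _ (Nat.le_add_left 1 n)))
      (fun n ↦ by linear_combination hrec n) s
  set M := 1 - α * (∑ i ∈ Icc 1 s, (k i : ℝ)) / (s * l)
  set P := ∏ i ∈ Icc 1 s, (1 - c i)
  have hamgm : P ≤ M ^ s := by
    have h := Real.prod_one_sub_le_one_sub_mean_pow (Icc 1 s) fun i hi ↦ hc i (mem_Icc.1 hi).1
    rwa [Nat.card_Icc, Nat.add_sub_cancel, ← sum_div, ← mul_sum, div_div, mul_comm (l : ℝ)] at h
  have hP : 0 ≤ P := prod_nonneg fun i hi ↦ sub_nonneg.2 (hc i (mem_Icc.1 hi).1)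
  calc (1 - M ^ s) * V = V - M ^ s * V := by ring
    _ ≤ V - P * V := sub_le_sub_left (mul_le_mul_of_nonneg_right hamgm hV) V
    _ ≤ V - P * (V - b 0) := sub_le_sub_left (mul_le_mul_of_nonneg_left (by linarith) hP) V
    _ ≤ b s := by linarith

/-- Induction step in the proof of Theorem 2 (via AM-GM). -/
theorem stmt_10 (l : ℕ) (hl : 0 < l) (α : ℝ) (hα0 : 0 < α) (hα1 : α ≤ 1)
    (V : ℝ) (hV : 0 ≤ V)
    (k : ℕ → ℕ) (hk : ∀ s, 1 ≤ s → 1 ≤ k s ∧ k s ≤ l)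
    (b : ℕ → ℝ) (hb0 : 0 ≤ b 0)
    (hrec : ∀ s, b (s + 1) ≥ (α * (k (s + 1) : ℝ) / l) * V
      + (1 - α * (k (s + 1) : ℝ) / l) * b s) :
    ∀ s, 1 ≤ s →
      b s ≥ (1 - (1 - α * (∑ i ∈ Finset.Icc 1 s, (k i : ℝ)) / (s * l)) ^ s) * V :=
  stmt_10_general l α hα1 V hV k hk b hb0 hrec
end

section
/- (Lemma 5, greedy step of generalized LDGM under additive noise) Let f : ℝ^n → ℝ be monotone on the nonnegative orthant with DR-submodularity ratio at least β, where 0 < β ≤ 1. Let e_1, …, e_m ∈ ℝ^n be nonnegative vectors, let γ and l be positive integers with γ dividing l, let i_1, …, i_{l/γ} ∈ {1, …, m}, and set v*_γ = Σ_{j=1}^{l/γ} γ·e_{i_j}. Let x be a nonnegative vector, let ε_1, …, ε_m be reals, and let i* ∈ {1, …, m} satisfy f(x + γ·e_{i*}) + ε_{i*} ≥ f(x + γ·e_i) + ε_i for all i ∈ {1, …, m}. Then f(x + e_{i*}) − f(x) ≥ (β²/l)·(f(v*_γ) − f(x)) − (β/l)·Σ_{j=1}^{l/γ} (ε_{i*}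 − ε_{i_j}). -/
/-!
The DR ratio extends from coordinate steps to arbitrary nonnegative steps, and then bounds the
gain of a sum of steps by `1/β` times the sum of the single gains. For `γ` copies of `e_{i*}`
this gives `β (f (x + γ e_{i*}) - f x) ≤ γ (f (x + e_{i*}) - f x)`. For the `l/γ` summands of
`v*_γ`, whose single gains the noisy greedy choice beats up to `ε_{i*} - ε_{i_j}`, it bounds
`β (f (x + v*_γ) - f x)`, which by monotonicity dominates `β (f v*_γ - f x)`. Since
`(l/γ) γ = l`, the two bounds combine to the claim.
-/

open Finset

variable {ι : Type*} [DecidableEq ι]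

def HasDRSubmodularityRatio (β : ℝ) (f : (ι → ℝ) → ℝ) : Prop :=
  ∀ x y : ι → ℝ, 0 ≤ x → x ≤ y → ∀ k : ℝ, 0 ≤ k → ∀ i : ι,
    f (x + k • (Pi.single i 1 : ι → ℝ)) - f x ≥ β * (f (y + k • (Pi.single i 1 : ι → ℝ)) - f y)

namespace HasDRSubmodularityRatio

variable {β : ℝ} {f : (ι → ℝ) → ℝ} {a b w x : ι → ℝ}

theorem mul_sub_le_sub_of_sum_single (hf : HasDRSubmodularityRatio β f) (ha : 0 ≤ a)
    (hab : a ≤ b) (hw : 0 ≤ w) (s : Finset ι) :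
    β * (f (b + ∑ i ∈ s, Pi.single i (w i)) - f b)
      ≤ f (a + ∑ i ∈ s, Pi.single i (w i)) - f a := by
  induction s using Finset.induction_on with
  | empty => simp
  | @insert c s hc ih =>
    set S := ∑ i ∈ s, Pi.single i (w i)
    have hS : 0 ≤ S := sum_nonneg fun i _ => Pi.single_nonneg.mpr (hw i)
    have hstep := hf (a + S) (b + S) (add_nonneg ha hS) (add_le_add_left hab S) (w c) (hw c) c
    rw [← Pi.single_smul', smul_eq_mul, mul_one] at hstep
    rw [sum_insert hc, add_comm (Pi.single c (w c)) S, ← add_assoc, ← add_assoc]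
    linarith

theorem mul_sub_le_sub [Fintype ι] (hf : HasDRSubmodularityRatio β f) (ha : 0 ≤ a)
    (hab : a ≤ b) (hw : 0 ≤ w) : β * (f (b + w) - f b) ≤ f (a + w) - f a := by
  simpa only [univ_sum_single] using hf.mul_sub_le_sub_of_sum_single ha hab hw univ

theorem mul_sub_le_sum_sub [Fintype ι] {J : Type*} (hf : HasDRSubmodularityRatio β f)
    (hx : 0 ≤ x) (v : J → ι → ℝ) (hv : ∀ j, 0 ≤ v j) (s : Finset J) :
    β * (f (x + ∑ j ∈ s, v j) - f x) ≤ ∑ j ∈ s, (f (x + v j) - f x) := by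
  classical
  induction s using Finset.induction_on with
  | empty => simp
  | @insert c s hc ih =>
    set S := ∑ j ∈ s, v j
    have hS : 0 ≤ S := sum_nonneg fun j _ => hv j
    have hstep := hf.mul_sub_le_sub hx (le_add_of_nonneg_right hS) (hv c)
    rw [sum_insert hc, sum_insert hc, add_comm (v c) S, ← add_assoc]
    linarith

theorem mul_sub_le_nsmul [Fintype ι] (hf : HasDRSubmodularityRatio β f) (hx : 0 ≤ x)
    (hw : 0 ≤ w) (k : ℕ) : β * (f (x + (k : ℝ) • w) - f x) ≤ k * (f (x + w) - f x) := by
  have h := hf.mul_sub_le_sum_sub hx (fun _ => w) (fun _ => hw) (range k)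
  rwa [sum_const, sum_const, card_range, ← Nat.cast_smul_eq_nsmul ℝ, nsmul_eq_mul] at h

end HasDRSubmodularityRatio

theorem stmt_12_general {n m : ℕ} (f : (Fin n → ℝ) → ℝ) (β : ℝ) (hβ0 : 0 < β)
    (hmono : ∀ x y : Fin n → ℝ, 0 ≤ x → x ≤ y → f x ≤ f y)
    (hDR : ∀ x y : Fin n → ℝ, 0 ≤ x → x ≤ y → ∀ k : ℝ, 0 ≤ k → ∀ i : Fin n,
      f (x + k • (Pi.single i 1 : Fin n → ℝ)) - f x ≥ β * (f (y + k • (Pi.single i 1 : Fin n → ℝ)) - f y))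
    (e : Fin m → Fin n → ℝ) (hpos : ∀ i, 0 ≤ e i)
    (γ l : ℕ) (hl : 0 < l) (hdvd : γ ∣ l)
    (idx : Fin (l / γ) → Fin m)
    (x : Fin n → ℝ) (hx : 0 ≤ x)
    (eps : Fin m → ℝ)
    (istar : Fin m)
    (hbest : ∀ i : Fin m,
      f (x + (γ : ℝ) • e i) + eps i ≤ f (x + (γ : ℝ) • e istar) + eps istar) :
    f (x + e istar) - f x
      ≥ (β ^ 2 / l) * (f (∑ j, (γ : ℝ) • e (idx j)) - f x)
        - (β / l) * ∑ j, (eps istar - eps (idx j)) := by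
  have hf : HasDRSubmodularityRatio β f := hDR
  have hγe : ∀ i, 0 ≤ (γ : ℝ) • e i := fun i => smul_nonneg γ.cast_nonneg (hpos i)
  set v := ∑ j, (γ : ℝ) • e (idx j)
  set N : ℝ := ((l / γ : ℕ) : ℝ)
  set D := f (x + (γ : ℝ) • e istar) - f x
  have hNγ : N * γ = l := by rw [← Nat.cast_mul, Nat.div_mul_cancel hdvd]
  have hv_le : f v ≤ f (x + v) :=
    hmono v (x + v) (sum_nonneg fun j _ => hγe _) (le_add_of_nonneg_left hx)
  have hsum : β * (f (x + v) - f x) ≤ N * D + ∑ j, (eps istar - eps (idx j)) := calc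
    _ ≤ ∑ j, (f (x + (γ : ℝ) • e (idx j)) - f x) :=
      hf.mul_sub_le_sum_sub hx _ (fun j => hγe _) univ
    _ ≤ ∑ j, (D + (eps istar - eps (idx j))) :=
      sum_le_sum fun j _ => by linarith [hbest (idx j)]
    _ = N * D + ∑ j, (eps istar - eps (idx j)) := by simp [sum_add_distrib, N]
  have hline : β * D ≤ γ * (f (x + e istar) - f x) := hf.mul_sub_le_nsmul hx (hpos istar) γ
  have hN : 0 ≤ N := Nat.cast_nonneg _
  have hl' : (0 : ℝ) < l := Nat.cast_pos.mpr hl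
  rw [ge_iff_le, div_mul_eq_mul_div, div_mul_eq_mul_div, ← sub_div, div_le_iff₀ hl', ← hNγ]
  nlinarith [mul_le_mul_of_nonneg_left hline hN, mul_le_mul_of_nonneg_left hsum hβ0.le]

/-- Lemma 5: greedy step of generalized LDGM under additive noise. -/
theorem stmt_12 {n m : ℕ} (f : (Fin n → ℝ) → ℝ) (β : ℝ) (hβ0 : 0 < β) (hβ1 : β ≤ 1)
    (hmono : ∀ x y : Fin n → ℝ, 0 ≤ x → x ≤ y → f x ≤ f y)
    (hDR : ∀ x y : Fin n → ℝ, 0 ≤ x → x ≤ y → ∀ k : ℝ, 0 ≤ k → ∀ i : Fin n,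
      f (x + k • (Pi.single i 1 : Fin n → ℝ)) - f x ≥ β * (f (y + k • (Pi.single i 1 : Fin n → ℝ)) - f y))
    (e : Fin m → Fin n → ℝ) (hpos : ∀ i, 0 ≤ e i)
    (γ l : ℕ) (hγ : 0 < γ) (hl : 0 < l) (hdvd : γ ∣ l)
    (idx : Fin (l / γ) → Fin m)
    (x : Fin n → ℝ) (hx : 0 ≤ x)
    (eps : Fin m → ℝ)
    (istar : Fin m)
    (hbest : ∀ i : Fin m,
      f (x + (γ : ℝ) • e i) + eps i ≤ f (x + (γ : ℝ) • e istar) + eps istar) :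
    f (x + e istar) - f x
      ≥ (β ^ 2 / l) * (f (∑ j, (γ : ℝ) • e (idx j)) - f x)
        - (β / l) * ∑ j, (eps istar - eps (idx j)) :=
  stmt_12_general f β hβ0 hmono hDR e hpos γ l hl hdvd idx x hx eps istar hbest
end

section
/- (Theorem 4, generalized LDGM under additive noise) Let E ⊆ ℝ^n be a finite nonempty set of nonnegative vectors, P = conv(E), l a positive integer, and enumerate 𝓔 = {(1/l)·x : x ∈ Frontier(E)} as e_1, …, e_m where m = |Frontier(E)|. Let γ be a positive integer dividing l, let 0 < β ≤ 1, and let f : ℝ^n → ℝ satisfy f(0) = 0, be monotone on the nonnegative orthant, and have DR-submodularity ratio at least β. Assume L ≥ 0 satisfies |f(x) − f(y)| ≤ L·‖x − y‖ for all x, y ∈ Frontier(P); assume D ≥ 0 satisfies ‖x‖ ≤ D for all x ∈ P; and assume x* ∈ Frontier(P) satisfies f(x*) ≥ f(y) for all y ∈ P. Let reals ε_{t,i} be given for 0 ≤ t < l and 1 ≤ i ≤ m. Define x_0 = 0 and, for each 0 ≤ t < l, x_{t+1} = x_t + e_{i*_t} where i*_t ∈ {1, …, m} satisfies f(x_t +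 γ·e_{i*_t}) + ε_{t,i*_t} ≥ f(x_t + γ·e_i) + ε_{t,i} for all i. Let i_1, …, i_{l/γ} ∈ {1, …, m} be indices such that v*_γ = Σ_{j=1}^{l/γ} γ·e_{i_j} satisfies f(v*_γ) ≥ f(w) for every w that is a sum of l/γ elements (with repetition) of {γ·e_1, …, γ·e_m}. Then f(x_l) ≥ (1 − e^{−β²})·f(x*) − (1 − e^{−β²})·m·D·L·γ/l − (β/l)·Σ_{t=0}^{l−1} (1 − β²/l)^{l−1−t}·Σ_{j=1}^{l/γ} (ε_{t,i*_t} − ε_{t,i_j}). -/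
/-- Euclidean norm on `Fin n → ℝ`. -/
noncomputable def euclidSqrtNorm {n : ℕ} (x : Fin n → ℝ) : ℝ :=
  Real.sqrt (∑ i, (x i) ^ 2)

open Set Finset Filter Topology

theorem mem_maxFrontier_iff {n : ℕ} {S : Set (Fin n → ℝ)} {x : Fin n → ℝ} :
    x ∈ maxFrontier S ↔ Maximal (· ∈ S) x := by
  refine ⟨fun ⟨hx, hmax⟩ => ⟨hx, fun y hy hxy => ?_⟩, fun h => ⟨h.1, ?_⟩⟩
  · by_contra hyx
    exact hmax ⟨y, hy, hxy, fun h => hyx (h ▸ le_rfl)⟩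
  · rintro ⟨y, hy, hxy, hne⟩
    exact hne (le_antisymm hxy (h.2 hy hxy))

theorem maxFrontier_eq_setOf_maximal {n : ℕ} (S : Set (Fin n → ℝ)) :
    maxFrontier S = {x | Maximal (· ∈ S) x} :=
  Set.ext fun _ => mem_maxFrontier_iff

theorem exists_weights_of_mem_convexHull_range {V ι : Type*} [AddCommGroup V] [Module ℝ V]
    [Fintype ι] {p : ι → V} {x : V}
    (hx : x ∈ convexHull ℝ (range p)) :
    ∃ w : ι → ℝ, (∀ i, 0 ≤ w i) ∧ ∑ i, w i = 1 ∧ ∑ i, w i • p i = x := by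
  classical
  rw [convexHull_range_eq_exists_affineCombination] at hx
  obtain ⟨s, w, hw₀, hw₁, rfl⟩ := hx
  refine ⟨fun i => if i ∈ s then w i else 0, fun i => ?_, ?_, ?_⟩
  · dsimp only
    split_ifs with hi
    exacts [hw₀ i hi, le_rfl]
  · rw [Finset.sum_ite_mem, Finset.univ_inter, hw₁]
  · simp only [ite_smul, zero_smul, Finset.sum_ite_mem, Finset.univ_inter]
    exact (s.affineCombination_eq_linear_combination p w hw₁).symm

theorem exists_mem_Ioo_mul_le {ι : Type*} [Finite ι] {w u : ι → ℝ} (hw : ∀ i, 0 ≤ w i)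
    (hsupp : ∀ i, 0 < u i → 0 < w i) : ∃ ε ∈ Ioo (0 : ℝ) 1, ∀ i, ε * u i ≤ w i := by
  have hsmall : ∀ᶠ ε in 𝓝[>] (0 : ℝ), ε < 1 ∧ ∀ i, ε * u i ≤ w i := by
    refine ((eventually_lt_nhds one_pos).filter_mono nhdsWithin_le_nhds).and
      (eventually_all.2 fun i => ?_)
    rcases le_or_gt (u i) 0 with hu | hu
    · filter_upwards [self_mem_nhdsWithin] with ε (hε : 0 < ε)
      nlinarith [hw i]
    · have hlim : Tendsto (· * u i) (𝓝 0) (𝓝 0) := by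
        simpa using (continuous_mul_const (u i)).tendsto 0
      exact (hlim.eventually (eventually_le_nhds (hsupp i hu))).filter_mono nhdsWithin_le_nhds
  obtain ⟨ε, ⟨hε1, hεw⟩, hε0⟩ := (hsmall.and self_mem_nhdsWithin).exists
  exact ⟨ε, ⟨hε0, hε1⟩, hεw⟩

section OrderedModule

variable {V : Type*} [AddCommGroup V] [PartialOrder V] [IsOrderedAddMonoid V] [Module ℝ V]
  [PosSMulMono ℝ V]

theorem Convex.maximal_of_mem_openSegment {K : Set V} (hK : Convex ℝ K) {x y z : V}
    (hx : Maximal (· ∈ K) x) (hy : y ∈ K) (hz : z ∈ K) (hxyz : x ∈ openSegment ℝ y z) :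
    Maximal (· ∈ K) z := by
  refine ⟨hz, fun u hu hzu => ?_⟩
  obtain ⟨a, b, ha, hb, hab, rfl⟩ := hxyz
  have hle : a • y + b • z ≤ a • y + b • u := by gcongr
  have := hx.2 (hK hy hu ha.le hb.le hab) hle
  exact (smul_le_smul_iff_of_pos_left hb).1 (le_of_add_le_add_left this)

theorem forall_mem_convexHull_exists_le {s t : Set V} (h : ∀ y ∈ s, ∃ p ∈ t, y ≤ p) :
    ∀ y ∈ convexHull ℝ s, ∃ p ∈ convexHull ℝ t, y ≤ p := by
  refine fun y hy => convexHull_min (t := {y | ∃ p ∈ convexHull ℝ t, y ≤ p}) ?_ ?_ hy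
  · intro y hy
    obtain ⟨p, hp, hyp⟩ := h y hy
    exact ⟨p, subset_convexHull ℝ t hp, hyp⟩
  · rintro y₁ ⟨p₁, hp₁, hyp₁⟩ y₂ ⟨p₂, hp₂, hyp₂⟩ a b ha hb hab
    exact ⟨a • p₁ + b • p₂, convex_convexHull ℝ t hp₁ hp₂ ha hb hab, by gcongr⟩

theorem Set.Finite.mem_convexHull_maximal {E : Set V} (hE : E.Finite) {x : V}
    (hx : Maximal (· ∈ convexHull ℝ E) x) : x ∈ convexHull ℝ {y | Maximal (· ∈ E) y} := by
  obtain ⟨p, hp, hxp⟩ := forall_mem_convexHull_exists_le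
    (fun y hy => (hE.exists_le_maximal hy).imp fun p hp => ⟨hp.2, hp.1⟩) x hx.1
  have hpE : p ∈ convexHull ℝ E := convexHull_mono (fun y hy => hy.1) hp
  rwa [le_antisymm hxp (hx.2 hpE hxp)]

theorem Convex.maximal_sum_smul_of_support {ι : Type*} [Fintype ι] {K : Set V}
    (hK : Convex ℝ K) {p : ι → V} (hp : ∀ i, p i ∈ K) {w u : ι → ℝ}
    (hw₀ : ∀ i, 0 ≤ w i) (hw₁ : ∑ i, w i = 1) (hu₀ : ∀ i, 0 ≤ u i) (hu₁ : ∑ i, u i = 1)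
    (hsupp : ∀ i, 0 < u i → 0 < w i) (hx : Maximal (· ∈ K) (∑ i, w i • p i)) :
    Maximal (· ∈ K) (∑ i, u i • p i) := by
  obtain ⟨ε, ⟨hε0, hε1⟩, hεu⟩ := exists_mem_Ioo_mul_le hw₀ hsupp
  have hε : 0 < 1 - ε := sub_pos.2 hε1
  set v : ι → ℝ := fun i => (w i - ε * u i) / (1 - ε)
  have hvK : ∑ i, v i • p i ∈ K := by
    refine hK.sum_mem (fun i _ => div_nonneg (sub_nonneg.2 (hεu i)) hε.le) ?_ (fun i _ => hp i)
    rw [← Finset.sum_div, Finset.sum_sub_distrib, ← Finset.mul_sum, hw₁, hu₁, mul_one,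
      div_self hε.ne']
  refine hK.maximal_of_mem_openSegment hx hvK (hK.sum_mem (fun i _ => hu₀ i) hu₁
    (fun i _ => hp i)) ⟨1 - ε, ε, hε, hε0, by ring, ?_⟩
  simp only [v, Finset.smul_sum, smul_smul, ← Finset.sum_add_distrib, ← add_smul]
  refine Finset.sum_congr rfl fun i _ => ?_
  rw [mul_div_cancel₀ _ hε.ne', sub_add_cancel]

end OrderedModule

theorem exists_sum_comp_eq_sum_nsmul {ι M : Type*} [Fintype ι] [AddCommMonoid M] (c : ι → ℕ)
    {N : ℕ} (hc : ∑ i, c i = N) (g : ι → M) :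
    ∃ w : Fin N → ι, ∑ j, g (w j) = ∑ i, c i • g i := by
  have hcard : Fintype.card ((i : ι) × Fin (c i)) = Fintype.card (Fin N) := by
    simp [hc]
  let φ := Fintype.equivOfCardEq hcard
  refine ⟨fun j => (φ.symm j).1, ?_⟩
  rw [← Fintype.sum_equiv φ (fun σ => g σ.1) _ (fun σ => by simp), Fintype.sum_sigma]
  simp

theorem abs_natFloor_add_sub_natFloor_sub_le {a b : ℝ} (ha : 0 ≤ a) (hb : 0 ≤ b) :
    |((⌊a + b⌋₊ - ⌊a⌋₊ : ℕ) : ℝ) - b| ≤ 1 := by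
  rw [Nat.cast_sub (Nat.floor_le_floor (le_add_of_nonneg_right hb)), abs_le]
  have h₁ := Nat.floor_le ha
  have h₂ := Nat.lt_floor_add_one a
  have h₃ := Nat.floor_le (add_nonneg ha hb)
  have h₄ := Nat.lt_floor_add_one (a + b)
  constructor <;> linarith

theorem exists_nat_approx_sum_eq_floor (N : ℕ) : ∀ {m : ℕ} (w : Fin m → ℝ), (∀ i, 0 ≤ w i) →
    ∃ c : Fin m → ℕ, ∑ i, c i = ⌊N * ∑ i, w i⌋₊ ∧ (∀ i, |(c i : ℝ) - N * w i| ≤ 1) ∧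
      ∀ i, w i = 0 → c i = 0
  | 0, w, _ => ⟨Fin.elim0, by simp, fun i => i.elim0, fun i => i.elim0⟩
  | m + 1, w, hw => by
    obtain ⟨c, hsum, hbound, hsupp⟩ :=
      exists_nat_approx_sum_eq_floor N (fun i => w (Fin.castSucc i)) (fun i => hw _)
    set a : ℝ := N * ∑ i : Fin m, w i.castSucc
    have ha : 0 ≤ a := mul_nonneg N.cast_nonneg (Finset.sum_nonneg fun i _ => hw _)
    have hb : 0 ≤ N * w (Fin.last m) := mul_nonneg N.cast_nonneg (hw _)
    refine ⟨Fin.snoc c (⌊a + N * w (Fin.last m)⌋₊ - ⌊a⌋₊), ?_, Fin.lastCases ?_ ?_,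
      Fin.lastCases ?_ ?_⟩
    · rw [Fin.sum_univ_castSucc, Fin.sum_univ_castSucc, mul_add]
      simp only [Fin.snoc_castSucc, Fin.snoc_last, hsum]
      exact Nat.add_sub_cancel' (Nat.floor_le_floor (le_add_of_nonneg_right hb))
    · simpa only [Fin.snoc_last] using abs_natFloor_add_sub_natFloor_sub_le ha hb
    · simpa only [Fin.snoc_castSucc] using hbound
    · intro h
      simp [h]
    · simpa only [Fin.snoc_castSucc] using hsupp

theorem euclidSqrtNorm_eq_norm {n : ℕ} (x : Fin n → ℝ) :
    euclidSqrtNorm x = ‖WithLp.toLp 2 x‖ := by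
  simp [euclidSqrtNorm, EuclideanSpace.norm_eq]

theorem euclidSqrtNorm_sum_smul_le {n : ℕ} {ι : Type*} [Fintype ι] (a : ι → ℝ)
    (v : ι → Fin n → ℝ) : euclidSqrtNorm (∑ i, a i • v i) ≤ ∑ i, |a i| * euclidSqrtNorm (v i) := by
  simp only [euclidSqrtNorm_eq_norm, WithLp.toLp_sum, WithLp.toLp_smul]
  refine (norm_sum_le _ _).trans_eq (Finset.sum_congr rfl fun i _ => ?_)
  rw [norm_smul, Real.norm_eq_abs]

theorem exists_average_maximal_near {n m N : ℕ} (hN : 0 < N) {K : Set (Fin n → ℝ)}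
    (hK : Convex ℝ K) {p : Fin m → Fin n → ℝ} (hpK : ∀ i, p i ∈ K) {D : ℝ}
    (hpD : ∀ i, euclidSqrtNorm (p i) ≤ D) {x : Fin n → ℝ} (hx : Maximal (· ∈ K) x)
    (hxp : x ∈ convexHull ℝ (range p)) :
    ∃ w : Fin N → Fin m, Maximal (· ∈ K) ((N : ℝ)⁻¹ • ∑ j, p (w j)) ∧
      euclidSqrtNorm ((N : ℝ)⁻¹ • ∑ j, p (w j) - x) ≤ m * D / N := by
  obtain ⟨lam, hlam₀, hlam₁, rfl⟩ := exists_weights_of_mem_convexHull_range hxp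
  obtain ⟨c, hcsum, hcbound, hcsupp⟩ := exists_nat_approx_sum_eq_floor N lam hlam₀
  rw [hlam₁, mul_one, Nat.floor_natCast] at hcsum
  obtain ⟨w, hw⟩ := exists_sum_comp_eq_sum_nsmul c hcsum p
  have hN' : (0 : ℝ) < N := Nat.cast_pos.2 hN
  set u : Fin m → ℝ := fun i => c i / N
  have hz : (N : ℝ)⁻¹ • ∑ j, p (w j) = ∑ i, u i • p i := by
    simp only [hw, Finset.smul_sum, ← Nat.cast_smul_eq_nsmul ℝ, smul_smul, u, div_eq_inv_mul]
  refine ⟨w, hz ▸ hK.maximal_sum_smul_of_support hpK hlam₀ hlam₁ (fun i => by positivity) ?_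
    (fun i hi => (hlam₀ i).lt_of_ne fun h => ?_) hx, ?_⟩
  · rw [← Finset.sum_div, ← Nat.cast_sum, hcsum, div_self hN'.ne']
  · simp [u, hcsupp i h.symm] at hi
  · have hu : ∀ i, |u i - lam i| ≤ 1 / N := fun i => by
      have hdiff : u i - lam i = ((c i : ℝ) - N * lam i) / N := by
        rw [sub_div, mul_div_cancel_left₀ _ hN'.ne']
      rw [hdiff, abs_div, abs_of_pos hN']
      exact div_le_div_of_nonneg_right (hcbound i) hN'.le
    calc euclidSqrtNorm ((N : ℝ)⁻¹ • ∑ j, p (w j) - ∑ i, lam i • p i)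
        = euclidSqrtNorm (∑ i, (u i - lam i) • p i) := by
          simp only [hz, sub_smul, Finset.sum_sub_distrib]
      _ ≤ ∑ i, |u i - lam i| * euclidSqrtNorm (p i) := euclidSqrtNorm_sum_smul_le _ _
      _ ≤ ∑ _i : Fin m, 1 / N * D := Finset.sum_le_sum fun i _ =>
          mul_le_mul (hu i) (hpD i) (Real.sqrt_nonneg _) (by positivity)
      _ = m * D / N := by
          rw [sum_const, card_univ, Fintype.card_fin, nsmul_eq_mul]
          ring

theorem le_pow_mul_add_sum_of_le_mul_add {u c : ℕ → ℝ} {q : ℝ} (hq : 0 ≤ q) {T : ℕ}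
    (h : ∀ t < T, u (t + 1) ≤ q * u t + c t) :
    u T ≤ q ^ T * u 0 + ∑ t ∈ range T, q ^ (T - 1 - t) * c t := by
  induction T with
  | zero => simp
  | succ T ih =>
    have hshift : ∑ t ∈ range T, q ^ (T - t) * c t = q * ∑ t ∈ range T, q ^ (T - 1 - t) * c t := by
      rw [Finset.mul_sum]
      refine Finset.sum_congr rfl fun t ht => ?_
      rw [← mul_assoc, ← pow_succ', show T - 1 - t + 1 = T - t by have := mem_range.1 ht; omega]
    calc u (T + 1) ≤ q * u T + c T := h T T.lt_succ_self
      _ ≤ q * (q ^ T * u 0 + ∑ t ∈ range T, q ^ (T - 1 - t) * c t) + c T := by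
          gcongr; exact ih fun t ht => h t (ht.trans T.lt_succ_self)
      _ = q ^ (T + 1) * u 0 + ∑ t ∈ range (T + 1), q ^ (T + 1 - 1 - t) * c t := by
          rw [sum_range_succ, Nat.add_sub_cancel, Nat.sub_self, pow_zero, one_mul, hshift,
            pow_succ']
          ring

def HasDRRatio {ι : Type*} [DecidableEq ι] (β : ℝ) (f : (ι → ℝ) → ℝ) : Prop :=
  ∀ x y : ι → ℝ, 0 ≤ x → x ≤ y → ∀ k : ℝ, 0 ≤ k → ∀ i : ι,
    f (x + k • (Pi.single i 1 : ι → ℝ)) - f x ≥ β * (f (y + k • (Pi.single i 1 : ι → ℝ)) - f y)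

namespace HasDRRatio

variable {ι : Type*} [Fintype ι] [DecidableEq ι] {β : ℝ} {f : (ι → ℝ) → ℝ}

theorem mul_sub_le_sub (hf : HasDRRatio β f) {x y v : ι → ℝ} (hx : 0 ≤ x) (hxy : x ≤ y)
    (hv : 0 ≤ v) : β * (f (y + v) - f y) ≤ f (x + v) - f x := by
  suffices h : ∀ s : Finset ι, β * (f (y + ∑ i ∈ s, v i • Pi.single i 1) - f y) ≤
      f (x + ∑ i ∈ s, v i • Pi.single i 1) - f x by
    have hv_eq : ∑ i, v i • (Pi.single i 1 : ι → ℝ) = v := by ext j; simp [Pi.single_apply]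
    simpa only [hv_eq] using h univ
  intro s
  induction s using Finset.induction_on with
  | empty => simp
  | insert a s ha ih =>
    set u : ι → ℝ := ∑ i ∈ s, v i • Pi.single i 1
    have hu : 0 ≤ u :=
      Finset.sum_nonneg fun i _ => smul_nonneg (hv i) (Pi.single_nonneg.2 zero_le_one)
    have hstep := hf (x + u) (y + u) (add_nonneg hx hu) (by gcongr) (v a) (hv a) a
    rw [Finset.sum_insert ha, add_comm (v a • _), ← add_assoc, ← add_assoc]
    linarith

theorem mul_sub_le_sum_sub (hf : HasDRRatio β f) {κ : Type*} (s : Finset κ) {x : ι → ℝ}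
    (hx : 0 ≤ x) {w : κ → ι → ℝ} (hw : ∀ j ∈ s, 0 ≤ w j) :
    β * (f (x + ∑ j ∈ s, w j) - f x) ≤ ∑ j ∈ s, (f (x + w j) - f x) := by
  classical
  induction s using Finset.induction_on with
  | empty => simp
  | insert a s ha ih =>
    have hu : 0 ≤ ∑ j ∈ s, w j := Finset.sum_nonneg fun j hj => hw j (mem_insert_of_mem hj)
    have hstep := hf.mul_sub_le_sub hx (le_add_of_nonneg_right hu) (hw a (mem_insert_self a s))
    rw [Finset.sum_insert ha, Finset.sum_insert ha, add_comm (w a), ← add_assoc]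
    linarith [ih fun j hj => hw j (mem_insert_of_mem hj)]

theorem mul_sub_le_natCast_mul_sub (hf : HasDRRatio β f) {x d : ι → ℝ} (hx : 0 ≤ x)
    (hd : 0 ≤ d) (k : ℕ) : β * (f (x + (k : ℝ) • d) - f x) ≤ k * (f (x + d) - f x) := by
  simpa only [sum_const, card_range, ← Nat.cast_smul_eq_nsmul ℝ, smul_eq_mul] using
    hf.mul_sub_le_sum_sub (range k) hx fun _ _ => hd

theorem sq_mul_sub_le (hf : HasDRRatio β f) (hβ : 0 ≤ β) (hmono : MonotoneOn f (Ici 0))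
    {x d : ι → ℝ} (hx : 0 ≤ x) (hd : 0 ≤ d) {γ N : ℕ} {a : Fin N → ι → ℝ} (ha : ∀ j, 0 ≤ a j)
    {ε : Fin N → ℝ} {ε₀ : ℝ} (hgreedy : ∀ j, f (x + a j) + ε j ≤ f (x + (γ : ℝ) • d) + ε₀) :
    β ^ 2 * (f (∑ j, a j) - f x) ≤
      (N * γ : ℝ) * (f (x + d) - f x) + β * ∑ j, (ε₀ - ε j) := by
  have hsum : 0 ≤ ∑ j, a j := Finset.sum_nonneg fun j _ => ha j
  have hmono_sum : f (∑ j, a j) ≤ f (x + ∑ j, a j) :=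
    hmono hsum (add_nonneg hx hsum) (le_add_of_nonneg_left hx)
  have hdr_sum := hf.mul_sub_le_sum_sub univ hx fun j _ => ha j
  have hdr_dir := hf.mul_sub_le_natCast_mul_sub hx hd γ
  have hbest : ∑ j, (f (x + a j) - f x) ≤
      N * (f (x + (γ : ℝ) • d) - f x) + ∑ j, (ε₀ - ε j) := by
    calc ∑ j, (f (x + a j) - f x)
        ≤ ∑ j : Fin N, ((f (x + (γ : ℝ) • d) - f x) + (ε₀ - ε j)) :=
          Finset.sum_le_sum fun j _ => by linarith [hgreedy j]
      _ = N * (f (x + (γ : ℝ) • d) - f x) + ∑ j, (ε₀ - ε j) := by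
          rw [sum_add_distrib, sum_const, card_univ, Fintype.card_fin, nsmul_eq_mul]
  calc β ^ 2 * (f (∑ j, a j) - f x) ≤ β * (β * (f (x + ∑ j, a j) - f x)) := by
        rw [sq, mul_assoc]; gcongr
    _ ≤ β * (N * (f (x + (γ : ℝ) • d) - f x) + ∑ j, (ε₀ - ε j)) := by gcongr; linarith
    _ = N * (β * (f (x + (γ : ℝ) • d) - f x)) + β * ∑ j, (ε₀ - ε j) := by ring
    _ ≤ N * (γ * (f (x + d) - f x)) + β * ∑ j, (ε₀ - ε j) := by gcongr
    _ = (N * γ : ℝ) * (f (x + d) - f x) + β * ∑ j, (ε₀ - ε j) := by ring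

theorem one_sub_exp_mul_sub_le_greedy (hf : HasDRRatio β f) (hβ0 : 0 ≤ β) (hβ1 : β ≤ 1)
    (hmono : MonotoneOn f (Ici 0)) (hf0 : f 0 = 0) {m l γ N : ℕ} (hl : 0 < l)
    (hNγ : (N * γ : ℝ) = l) {e : Fin m → ι → ℝ} (he : ∀ i, 0 ≤ e i) {eps : ℕ → Fin m → ℝ}
    {x : ℕ → ι → ℝ} (hx0 : x 0 = 0) {istar : ℕ → Fin m}
    (hstep : ∀ t < l,
      (∀ i : Fin m, f (x t + (γ : ℝ) • e i) + eps t i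
        ≤ f (x t + (γ : ℝ) • e (istar t)) + eps t (istar t)) ∧
      x (t + 1) = x t + e (istar t))
    (a : Fin N → Fin m) :
    (1 - Real.exp (-β ^ 2)) * f (∑ j, (γ : ℝ) • e (a j)) - β / l * ∑ t ∈ range l,
      (1 - β ^ 2 / l) ^ (l - 1 - t) * ∑ j, (eps t (istar t) - eps t (a j)) ≤ f (x l) := by
  have hl' : (0 : ℝ) < l := Nat.cast_pos.2 hl
  set v := ∑ j, (γ : ℝ) • e (a j)
  have hv0 : 0 ≤ v := Finset.sum_nonneg fun j _ => smul_nonneg γ.cast_nonneg (he _)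
  have hv : 0 ≤ f v := hf0 ▸ hmono self_mem_Ici hv0 hv0
  have hx : ∀ t ≤ l, 0 ≤ x t := by
    intro t
    induction t with
    | zero => simp [hx0]
    | succ t ih => intro ht; rw [(hstep t ht).2]; exact add_nonneg (ih (by omega)) (he _)
  have hβl : β ^ 2 ≤ l := by nlinarith [(Nat.one_le_cast (α := ℝ)).2 hl]
  have hq : 0 ≤ 1 - β ^ 2 / l := by rw [sub_nonneg, div_le_one hl']; exact hβl
  have hrec := le_pow_mul_add_sum_of_le_mul_add (u := fun t => f v - f (x t))
    (c := fun t => β / l * ∑ j, (eps t (istar t) - eps t (a j))) hq (T := l) fun t ht => by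
    have hgreedy := hf.sq_mul_sub_le hβ0 hmono (hx t ht.le) (he (istar t))
      (fun j => smul_nonneg γ.cast_nonneg (he (a j))) fun j => (hstep t ht).1 (a j)
    rw [hNγ, ← (hstep t ht).2] at hgreedy
    rw [← mul_le_mul_iff_of_pos_left hl']
    have hexpand : (l : ℝ) * ((1 - β ^ 2 / l) * (f v - f (x t)) +
        β / l * ∑ j, (eps t (istar t) - eps t (a j))) =
        l * (f v - f (x t)) - β ^ 2 * (f v - f (x t)) +
          β * ∑ j, (eps t (istar t) - eps t (a j)) := by field_simp
    simp only [hexpand]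
    linarith
  have hsum : ∑ t ∈ range l, (1 - β ^ 2 / l) ^ (l - 1 - t) *
      (β / l * ∑ j, (eps t (istar t) - eps t (a j))) = β / l * ∑ t ∈ range l,
        (1 - β ^ 2 / l) ^ (l - 1 - t) * ∑ j, (eps t (istar t) - eps t (a j)) := by
    rw [Finset.mul_sum]
    exact Finset.sum_congr rfl fun _ _ => mul_left_comm _ _ _
  simp only [hx0, hf0, sub_zero, hsum] at hrec
  have hpow := mul_le_mul_of_nonneg_right (Real.one_sub_div_pow_le_exp_neg hβl) hv
  linarith

end HasDRRatio

theorem apply_sub_le_of_best_sum {n m l γ : ℕ} {E : Set (Fin n → ℝ)} (hE : E.Finite) (hl : 0 < l)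
    (hγ : 0 < γ) (hdvd : γ ∣ l) {e : Fin m → Fin n → ℝ}
    (hrange : range (fun i => (l : ℝ) • e i) = maxFrontier E) {f : (Fin n → ℝ) → ℝ} {L D : ℝ}
    (hL : 0 ≤ L)
    (hLip : ∀ x ∈ maxFrontier (convexHull ℝ E), ∀ y ∈ maxFrontier (convexHull ℝ E),
      |f x - f y| ≤ L * euclidSqrtNorm (x - y))
    (hDb : ∀ x ∈ convexHull ℝ E, euclidSqrtNorm x ≤ D) {xstar : Fin n → ℝ}
    (hxs : xstar ∈ maxFrontier (convexHull ℝ E)) {ii : Fin (l / γ) → Fin m}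
    (hii : ∀ w : Fin (l / γ) → Fin m,
      f (∑ j, (γ : ℝ) • e (w j)) ≤ f (∑ j, (γ : ℝ) • e (ii j))) :
    f xstar - m * D * L * γ / l ≤ f (∑ j, (γ : ℝ) • e (ii j)) := by
  have hN : 0 < l / γ := Nat.div_pos (Nat.le_of_dvd hl hdvd) hγ
  have hNγ : ((l / γ : ℕ) : ℝ) * γ = l := by exact_mod_cast Nat.div_mul_cancel hdvd
  have hpE : ∀ i, (l : ℝ) • e i ∈ convexHull ℝ E :=
    fun i => subset_convexHull ℝ E (hrange.subset (mem_range_self i)).1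
  have hxs' := mem_maxFrontier_iff.1 hxs
  have hxp : xstar ∈ convexHull ℝ (range fun i => (l : ℝ) • e i) := by
    simpa only [hrange, maxFrontier_eq_setOf_maximal] using hE.mem_convexHull_maximal hxs'
  obtain ⟨w, hzmax, hzdist⟩ := exists_average_maximal_near hN (convex_convexHull ℝ E) hpE
    (fun i => hDb _ (hpE i)) hxs' hxp
  have hz : ((l / γ : ℕ) : ℝ)⁻¹ • ∑ j, (l : ℝ) • e (w j) = ∑ j, (γ : ℝ) • e (w j) := by
    simp only [Finset.smul_sum, smul_smul, ← hNγ,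
      inv_mul_cancel_left₀ (Nat.cast_pos.2 hN : (0 : ℝ) < _).ne']
  rw [hz] at hzmax hzdist
  have hLz := hLip _ (mem_maxFrontier_iff.2 hzmax) xstar hxs
  have hscale : m * D / (l / γ : ℕ) = m * D * γ / l := by
    rw [← hNγ]; field_simp [(Nat.cast_pos.2 hγ).ne']
  calc f xstar - m * D * L * γ / l = f xstar - L * (m * D / (l / γ : ℕ)) := by
        rw [hscale]; ring
    _ ≤ f (∑ j, (γ : ℝ) • e (w j)) := by
        have hLdist := mul_le_mul_of_nonneg_left hzdist hL
        linarith [neg_abs_le (f (∑ j, (γ : ℝ) • e (w j)) - f xstar)]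
    _ ≤ f (∑ j, (γ : ℝ) • e (ii j)) := hii w

theorem stmt_13_general {n : ℕ} (E : Set (Fin n → ℝ)) (hfin : E.Finite)
    (hpos : ∀ v ∈ E, 0 ≤ v)
    (l : ℕ) (hl : 0 < l)
    (m : ℕ)
    (e : Fin m → Fin n → ℝ)
    (herange : Set.range e = (fun v : Fin n → ℝ => (l : ℝ)⁻¹ • v) '' maxFrontier E)
    (γ : ℕ) (hγ : 0 < γ) (hdvd : γ ∣ l)
    (β : ℝ) (hβ0 : 0 < β) (hβ1 : β ≤ 1)
    (f : (Fin n → ℝ) → ℝ) (hf0 : f 0 = 0)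
    (hmono : ∀ x y : Fin n → ℝ, 0 ≤ x → x ≤ y → f x ≤ f y)
    (hDR : ∀ x y : Fin n → ℝ, 0 ≤ x → x ≤ y → ∀ k : ℝ, 0 ≤ k → ∀ i : Fin n,
      f (x + k • (Pi.single i 1 : Fin n → ℝ)) - f x ≥ β * (f (y + k • (Pi.single i 1 : Fin n → ℝ)) - f y))
    (L : ℝ) (hL : 0 ≤ L)
    (hLip : ∀ x ∈ maxFrontier (convexHull ℝ E), ∀ y ∈ maxFrontier (convexHull ℝ E),
      |f x - f y| ≤ L * euclidSqrtNorm (x - y))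
    (D : ℝ) (hDb : ∀ x ∈ convexHull ℝ E, euclidSqrtNorm x ≤ D)
    (xstar : Fin n → ℝ) (hxs : xstar ∈ maxFrontier (convexHull ℝ E))
    (eps : ℕ → Fin m → ℝ)
    (x : ℕ → Fin n → ℝ) (hx0 : x 0 = 0)
    (istar : ℕ → Fin m)
    (hstep : ∀ t < l,
      (∀ i : Fin m, f (x t + (γ : ℝ) • e i) + eps t i
        ≤ f (x t + (γ : ℝ) • e (istar t)) + eps t (istar t)) ∧
      x (t + 1) = x t + e (istar t))
    (ii : Fin (l / γ) → Fin m)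
    (hii : ∀ w : Fin (l / γ) → Fin m,
      f (∑ j, (γ : ℝ) • e (w j)) ≤ f (∑ j, (γ : ℝ) • e (ii j))) :
    f (x l) ≥ (1 - Real.exp (-β ^ 2)) * f xstar
      - (1 - Real.exp (-β ^ 2)) * m * D * L * γ / l
      - (β / l) * ∑ t ∈ Finset.range l, (1 - β ^ 2 / l) ^ (l - 1 - t) *
          ∑ j, (eps t (istar t) - eps t (ii j)) := by
  have hl' : (0 : ℝ) < l := Nat.cast_pos.2 hl
  have hrange : range (fun i => (l : ℝ) • e i) = maxFrontier E := by
    rw [show (fun i => (l : ℝ) • e i) = (fun v => (l : ℝ) • v) ∘ e from rfl, range_comp,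
      herange, image_image]
    simp [smul_inv_smul₀ hl'.ne']
  have he : ∀ i, 0 ≤ e i := fun i => inv_smul_smul₀ hl'.ne' (e i) ▸
    smul_nonneg (inv_nonneg.2 hl'.le) (hpos _ (hrange.subset (mem_range_self i)).1)
  have hA := apply_sub_le_of_best_sum hfin hl hγ hdvd hrange hL hLip hDb hxs hii
  have hgreedy := HasDRRatio.one_sub_exp_mul_sub_le_greedy (f := f) hDR hβ0.le hβ1
    (fun a ha b _ hab => hmono a b ha hab) hf0 hl
    (by exact_mod_cast Nat.div_mul_cancel hdvd) he hx0 hstep ii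
  have hexp : Real.exp (-β ^ 2) ≤ 1 := Real.exp_le_one_iff.2 (neg_nonpos.2 (sq_nonneg β))
  linear_combination hgreedy + mul_le_mul_of_nonneg_left hA (sub_nonneg.2 hexp)

/-- Theorem 4: guarantee of generalized LDGM under additive noise. -/
theorem stmt_13 {n : ℕ} (E : Set (Fin n → ℝ)) (hfin : E.Finite) (hne : E.Nonempty)
    (hpos : ∀ v ∈ E, 0 ≤ v)
    (l : ℕ) (hl : 0 < l)
    (m : ℕ) (hm : m = (maxFrontier E).ncard)
    (e : Fin m → Fin n → ℝ) (heinj : Function.Injective e)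
    (herange : Set.range e = (fun v : Fin n → ℝ => (l : ℝ)⁻¹ • v) '' maxFrontier E)
    (γ : ℕ) (hγ : 0 < γ) (hdvd : γ ∣ l)
    (β : ℝ) (hβ0 : 0 < β) (hβ1 : β ≤ 1)
    (f : (Fin n → ℝ) → ℝ) (hf0 : f 0 = 0)
    (hmono : ∀ x y : Fin n → ℝ, 0 ≤ x → x ≤ y → f x ≤ f y)
    (hDR : ∀ x y : Fin n → ℝ, 0 ≤ x → x ≤ y → ∀ k : ℝ, 0 ≤ k → ∀ i : Fin n,
      f (x + k • (Pi.single i 1 : Fin n → ℝ)) - f x ≥ β * (f (y + k • (Pi.single i 1 : Fin n → ℝ)) - f y))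
    (L : ℝ) (hL : 0 ≤ L)
    (hLip : ∀ x ∈ maxFrontier (convexHull ℝ E), ∀ y ∈ maxFrontier (convexHull ℝ E),
      |f x - f y| ≤ L * euclidSqrtNorm (x - y))
    (D : ℝ) (hD : 0 ≤ D) (hDb : ∀ x ∈ convexHull ℝ E, euclidSqrtNorm x ≤ D)
    (xstar : Fin n → ℝ) (hxs : xstar ∈ maxFrontier (convexHull ℝ E))
    (hopt : ∀ y ∈ convexHull ℝ E, f y ≤ f xstar)
    (eps : ℕ → Fin m → ℝ)
    (x : ℕ → Fin n → ℝ) (hx0 : x 0 = 0)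
    (istar : ℕ → Fin m)
    (hstep : ∀ t < l,
      (∀ i : Fin m, f (x t + (γ : ℝ) • e i) + eps t i
        ≤ f (x t + (γ : ℝ) • e (istar t)) + eps t (istar t)) ∧
      x (t + 1) = x t + e (istar t))
    (ii : Fin (l / γ) → Fin m)
    (hii : ∀ w : Fin (l / γ) → Fin m,
      f (∑ j, (γ : ℝ) • e (w j)) ≤ f (∑ j, (γ : ℝ) • e (ii j))) :
    f (x l) ≥ (1 - Real.exp (-β ^ 2)) * f xstar
      - (1 - Real.exp (-β ^ 2)) * m * D * L * γ / l
      - (β / l) * ∑ t ∈ Finset.range l, (1 - β ^ 2 / l) ^ (l - 1 - t) *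
          ∑ j, (eps t (istar t) - eps t (ii j)) :=
  stmt_13_general E hfin hpos l hl m e herange γ hγ hdvd β hβ0 hβ1 f hf0 hmono hDR L hL hLip D hDb
    xstar hxs eps x hx0 istar hstep ii hii
end

section
/- (Lemma 10, lattice approximation of the optimum under the constraint {a·x ≤ b, 0 ≤ x ≤ c}) Let a ∈ ℝ^n with a_i > 0 for all i, let b > 0, and set Q = {x ∈ ℝ^n : x ≥ 0 and ⟨a, x⟩ ≤ b}. Let c ∈ ℝ^n with c ≥ 0, C = {x ∈ ℝ^n : 0 ≤ x ≤ c}, and P = Q ∩ C. Let l be a positive integer, set r_i = (b/a_i)·χ_i and 𝓔 = {(1/l)·r_i : i ∈ {1, …, n}}, and let D ≥ 0 satisfy ‖x‖ ≤ D for all x ∈ Q. Then for every x* ∈ Frontier(P) there exist an integer 0 ≤ l' ≤ l and elements e'_1, …, e'_{l'} ∈ 𝓔 (repetitions allowed) such that v' = e'_1 + ⋯ + e'_{l'} belongs to P and ‖x* − v'‖ ≤ n·D/l. -/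
/-- Euclidean norm on `Fin n → ℝ`. -/
noncomputable def eucNorm {n : ℕ} (x : Fin n → ℝ) : ℝ :=
  Real.sqrt (∑ i, (x i) ^ 2)

/-!
Round `x*` down, coordinate by coordinate, to the lattice of multiples of the steps
`s i = b / (l * a i)` along `χ_i`. The rounded point `v'` lies below `x*`, hence in `P`; since
`a i * s i = b / l`, the bound `⟨a, v'⟩ ≤ b` says exactly that `v'` uses at most `l` steps. Each
coordinate error is below `s i ≤ D / l`, because the vertex `(b / a i) χ_i` lies in `Q`, and the
Euclidean norm is at most the `ℓ¹` norm.
-/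

open Finset

theorem eucNorm_le_sum_abs {n : ℕ} (x : Fin n → ℝ) : eucNorm x ≤ ∑ i, |x i| := by
  rw [eucNorm, Real.sqrt_le_left (by positivity)]
  simpa only [sq_abs] using sum_sq_le_sq_sum_of_nonneg fun i _ => abs_nonneg (x i)

theorem eucNorm_single {n : ℕ} (i : Fin n) (t : ℝ) : eucNorm (Pi.single i t) = |t| := by
  rw [eucNorm, Fintype.sum_eq_single i fun j hj => by simp [Pi.single_eq_of_ne hj],
    Pi.single_eq_same, Real.sqrt_sq_eq_abs]

theorem div_le_of_eucNorm_le {n : ℕ} {a : Fin n → ℝ} {b D : ℝ} {i : Fin n} (hai : 0 < a i)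
    (hb : 0 ≤ b) (hD : ∀ x : Fin n → ℝ, 0 ≤ x → ∑ i, a i * x i ≤ b → eucNorm x ≤ D) :
    b / a i ≤ D := by
  have hbi : 0 ≤ b / a i := div_nonneg hb hai.le
  have hmem : ∑ j, a j * (Pi.single i (b / a i) : Fin n → ℝ) j ≤ b := by
    rw [Fintype.sum_eq_single i fun j hj => by simp [Pi.single_eq_of_ne hj], Pi.single_eq_same,
      mul_div_cancel₀ _ hai.ne']
  simpa [eucNorm_single, abs_of_nonneg hbi] using
    hD _ (Pi.single_nonneg.mpr hbi) hmem

section Floor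

variable {K : Type*} [Field K] [LinearOrder K] [IsStrictOrderedRing K] [FloorSemiring K]

theorem natFloor_div_mul_le {x s : K} (hx : 0 ≤ x) (hs : 0 < s) : ⌊x / s⌋₊ * s ≤ x :=
  (le_div_iff₀ hs).mp (Nat.floor_le (div_nonneg hx hs.le))

theorem sub_natFloor_div_mul_lt (x : K) {s : K} (hs : 0 < s) : x - ⌊x / s⌋₊ * s < s := by
  have := (div_lt_iff₀ hs).mp (Nat.lt_floor_add_one (x / s))
  linarith

end Floor

theorem exists_fin_sum_eq_sum_nsmul {ι M : Type*} [Fintype ι] [AddCommMonoid M] (f : ι → M)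
    (k : ι → ℕ) : ∃ e : Fin (∑ i, k i) → M, (∀ j, ∃ i, e j = f i) ∧ ∑ j, e j = ∑ i, k i • f i := by
  let E : (Σ i, Fin (k i)) ≃ Fin (∑ i, k i) := Fintype.equivFinOfCardEq (by simp)
  refine ⟨fun j => f (E.symm j).1, fun j => ⟨_, rfl⟩, ?_⟩
  rw [← E.sum_comp]
  simp [Fintype.sum_sigma]

theorem sum_nsmul_smul_single {ι : Type*} [Fintype ι] [DecidableEq ι] (k : ι → ℕ) (s : ι → ℝ) :
    ∑ i, k i • s i • (Pi.single i 1 : ι → ℝ) = fun i => k i * s i := by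
  rw [← Finset.univ_sum_single fun i => (k i : ℝ) * s i]
  simp [← Pi.single_smul, mul_comm]

theorem sum_le_of_sum_mul_steps_le {ι : Type*} [Fintype ι] {a : ι → ℝ} (ha : ∀ i, a i ≠ 0)
    {b : ℝ} (hb : 0 < b) {l : ℕ} (hl : 0 < l) {k : ι → ℕ}
    (h : ∑ i, a i * (k i * ((l : ℝ)⁻¹ * (b / a i))) ≤ b) : ∑ i, k i ≤ l := by
  have hsum : ∑ i, a i * (k i * ((l : ℝ)⁻¹ * (b / a i))) = (∑ i, k i : ℕ) / l * b := by
    push_cast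
    rw [sum_div, sum_mul]
    refine sum_congr rfl fun i _ => ?_
    field_simp [ha i]
  rw [hsum, mul_le_iff_le_one_left hb, div_le_one (Nat.cast_pos.mpr hl)] at h
  exact_mod_cast h

theorem stmt_17_general {n : ℕ} (a : Fin n → ℝ) (ha : ∀ i, 0 < a i) (b : ℝ) (hb : 0 < b)
    (c : Fin n → ℝ)
    (l : ℕ) (hl : 0 < l)
    (D : ℝ)
    (hDb : ∀ x : Fin n → ℝ, 0 ≤ x → (∑ i, a i * x i) ≤ b → eucNorm x ≤ D) :
    ∀ xstar : Fin n → ℝ,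
      xstar ∈ maxFrontier
        {x : Fin n → ℝ | (0 ≤ x ∧ (∑ i, a i * x i) ≤ b) ∧ (0 ≤ x ∧ x ≤ c)} →
      ∃ l' : ℕ, l' ≤ l ∧ ∃ e' : Fin l' → Fin n → ℝ,
        (∀ j, ∃ i : Fin n, e' j = ((l : ℝ)⁻¹ * (b / a i)) • (Pi.single i 1 : Fin n → ℝ)) ∧
        (0 ≤ ∑ j, e' j ∧ (∑ i, a i * (∑ j, e' j) i) ≤ b ∧
          (0 ≤ ∑ j, e' j ∧ ∑ j, e' j ≤ c)) ∧
        eucNorm (xstar - ∑ j, e' j) ≤ n * D / l := by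
  intro xstar hx
  obtain ⟨⟨⟨hx0, hxb⟩, -, hxc⟩, -⟩ := hx
  have hl' : (0 : ℝ) < l := Nat.cast_pos.mpr hl
  set s : Fin n → ℝ := fun i => (l : ℝ)⁻¹ * (b / a i)
  have hs : ∀ i, 0 < s i := fun i => mul_pos (inv_pos.mpr hl') (div_pos hb (ha i))
  set k : Fin n → ℕ := fun i => ⌊xstar i / s i⌋₊
  set v : Fin n → ℝ := fun i => k i * s i
  obtain ⟨e, he, hsum⟩ := exists_fin_sum_eq_sum_nsmul (fun i => s i • Pi.single i 1) k
  have hv : ∑ j, e j = v := by rw [hsum, sum_nsmul_smul_single]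
  have hv0 : 0 ≤ v := fun i => mul_nonneg (Nat.cast_nonneg _) (hs i).le
  have hvx : v ≤ xstar := fun i => natFloor_div_mul_le (hx0 i) (hs i)
  have hav : ∑ i, a i * v i ≤ b :=
    (sum_le_sum fun i _ => mul_le_mul_of_nonneg_left (hvx i) (ha i).le).trans hxb
  have hk : ∑ i, k i ≤ l := sum_le_of_sum_mul_steps_le (fun i => (ha i).ne') hb hl hav
  refine ⟨∑ i, k i, hk, e, he, ?_⟩
  rw [hv]
  refine ⟨⟨hv0, hav, hv0, hvx.trans hxc⟩, ?_⟩
  have hstep : ∀ i, |(xstar - v) i| ≤ D / l := fun i => by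
    rw [Pi.sub_apply, abs_of_nonneg (sub_nonneg.mpr (hvx i))]
    refine (sub_natFloor_div_mul_lt (xstar i) (hs i)).le.trans ?_
    rw [show s i = b / a i / l from inv_mul_eq_div _ _]
    exact div_le_div_of_nonneg_right (div_le_of_eucNorm_le (ha i) hb.le hDb) hl'.le
  calc eucNorm (xstar - v) ≤ ∑ i, |(xstar - v) i| := eucNorm_le_sum_abs _
    _ ≤ ∑ _i : Fin n, D / l := sum_le_sum fun i _ => hstep i
    _ = n * D / l := by rw [sum_const, card_univ, Fintype.card_fin, nsmul_eq_mul, mul_div_assoc]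

/-- Lemma 10: lattice approximation of the optimum under the constraint
`{x : ⟨a,x⟩ ≤ b, 0 ≤ x ≤ c}`. -/
theorem stmt_17 {n : ℕ} (a : Fin n → ℝ) (ha : ∀ i, 0 < a i) (b : ℝ) (hb : 0 < b)
    (c : Fin n → ℝ) (hc : 0 ≤ c)
    (l : ℕ) (hl : 0 < l)
    (D : ℝ) (hD : 0 ≤ D)
    (hDb : ∀ x : Fin n → ℝ, 0 ≤ x → (∑ i, a i * x i) ≤ b → eucNorm x ≤ D) :
    ∀ xstar : Fin n → ℝ,
      xstar ∈ maxFrontier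
        {x : Fin n → ℝ | (0 ≤ x ∧ (∑ i, a i * x i) ≤ b) ∧ (0 ≤ x ∧ x ≤ c)} →
      ∃ l' : ℕ, l' ≤ l ∧ ∃ e' : Fin l' → Fin n → ℝ,
        (∀ j, ∃ i : Fin n, e' j = ((l : ℝ)⁻¹ * (b / a i)) • (Pi.single i 1 : Fin n → ℝ)) ∧
        (0 ≤ ∑ j, e' j ∧ (∑ i, a i * (∑ j, e' j) i) ≤ b ∧
          (0 ≤ ∑ j, e' j ∧ ∑ j, e' j ≤ c)) ∧
        eucNorm (xstar - ∑ j, e' j) ≤ n * D / l :=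
  stmt_17_general a ha b hb c l hl D hDb
end
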